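/- arXiv:1002.3959 — 9 statements merged into one kernel-verified Lean document; each statement's English description precedes it below -/
import Mathlib

section
/- The map π : D(M,θ) → ∏_{k∈ℤ/pℤ} C(M_θ, ℂ), defined by letting the k-th component of π(a) be the restriction to M_θ of the function x ↦ Σ_{j∈ℤ/pℤ} ω^{jk} a_{0,j}(x), is a surjective unital star-algebra homomorphism whose kernel is exactly D(M₀,θ) = {a ∈ D(M,θ) : every entry of a vanishes at every point of M_θ}. -/
/-!
At a fixed point `x` of `θ`, the relation `a_{i+1,j+1} = a_{i,j} ∘ θ` makes the scalar matrix
`a(x)` circulant, `a_{i,j}(x) = a_{0,j-i}(x)`. Products and adjoints of circulant matrices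
correspond to convolution and conjugate reflection of their first rows, and `π(a)(x)` is the
discrete Fourier transform of the first row of `a(x)`. The Fourier transform on `ℤ/pℤ` is a linear
isomorphism turning convolution into pointwise product, which gives the homomorphism property and
the kernel. For surjectivity, invert the transform in `C(M_θ, ℂ)`, extend the resulting first row
to `M` by Tietze, and spread it over the matrix as `a_{i,j} = h_{j-i} ∘ θ^i`.
-/

open Matrix

/-- `DPred p θ a` says that the matrix `a ∈ M_p(C(M,ℂ))` (indexed by `ℤ/pℤ`) lies in
`D(M,θ)`, i.e. `a_{i+1,j+1} = a_{i,j} ∘ θ`. -/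
def DPred {M : Type*} [TopologicalSpace M] (p : ℕ) (θ : M → M)
    (a : Matrix (ZMod p) (ZMod p) C(M, ℂ)) : Prop :=
  ∀ i j : ZMod p, ∀ x : M, a (i + 1) (j + 1) x = a i j (θ x)

open ZMod

namespace ZMod

variable {N : ℕ} [NeZero N]

lemma pow_val_eq_stdAddChar {ω : ℂ} (hω : ω = Complex.exp (2 * Real.pi * Complex.I / N))
    (m : ZMod N) : ω ^ m.val = stdAddChar m := by
  rw [stdAddChar_apply, toCircle_apply, hω, ← Complex.exp_nat_mul]
  ring_nf

lemma dft_comp_linearMap {E F : Type*} [AddCommGroup E] [Module ℂ E] [AddCommGroup F]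
    [Module ℂ F] (L : E →ₗ[ℂ] F) (Φ : ZMod N → E) : 𝓕 (L ∘ Φ) = L ∘ 𝓕 Φ := by
  ext k
  simp [dft_apply, map_sum]

lemma dft_convolution (Φ Ψ : ZMod N → ℂ) (k : ZMod N) :
    𝓕 (fun j ↦ ∑ l, Φ l * Ψ (j - l)) k = 𝓕 Φ k * 𝓕 Ψ k := by
  simp only [dft_apply, smul_eq_mul]
  rw [Finset.sum_mul_sum]
  simp only [Finset.mul_sum]
  rw [Finset.sum_comm]
  refine Finset.sum_congr rfl fun l _ ↦ Fintype.sum_equiv (Equiv.subRight l) _ _ fun j ↦ ?_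
  rw [Equiv.subRight_apply, show -(j * k) = -(l * k) + -((j - l) * k) by ring,
    AddChar.map_add_eq_mul]
  ring

lemma dft_conj_neg (Φ : ZMod N → ℂ) (k : ZMod N) :
    𝓕 (fun j ↦ starRingEnd ℂ (Φ (-j))) k = starRingEnd ℂ (𝓕 Φ k) := by
  simp only [dft_apply, smul_eq_mul, map_sum, map_mul]
  refine Fintype.sum_equiv (Equiv.neg _) _ _ fun j ↦ ?_
  simp [stdAddChar_apply, ← Circle.coe_inv_eq_conj, ← AddChar.map_neg_eq_inv]

lemma dft_single_zero_one (k : ZMod N) : 𝓕 (Pi.single 0 (1 : ℂ)) k = 1 := by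
  simp [dft_apply, Pi.single_apply]

end ZMod

lemma Function.iterate_val_add_one {α : Type*} {p : ℕ} [NeZero p] {f : α → α}
    (hf : ∀ x, f^[p] x = x) (i : ZMod p) (x : α) :
    f^[(i + 1).val] x = f^[i.val] (f x) := by
  rw [ZMod.val_add, ZMod.val_one_eq_one_mod, Nat.add_mod_mod,
    Function.IsPeriodicPt.iterate_mod_apply (hf x), Function.iterate_succ_apply]

section FixedPoints

variable {M : Type*} [TopologicalSpace M] {p : ℕ} [NeZero p] {θ : M → M}
  {a b : Matrix (ZMod p) (ZMod p) C(M, ℂ)}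

namespace DPred

variable {x : M}

lemma apply_eq_apply_zero_sub (ha : DPred p θ a) (hx : θ x = x) (i j : ZMod p) :
    a i j x = a 0 (j - i) x := by
  suffices h : ∀ n : ℕ, ∀ j, a n (j + n) x = a 0 j x by
    simpa using h i.val (j - i)
  intro n
  induction n with
  | zero => simp
  | succ n ih =>
    intro j
    rw [Nat.cast_succ, ← add_assoc, ha, hx, ih]

lemma mul_apply_zero (hb : DPred p θ b) (hx : θ x = x) (j : ZMod p) :
    (a * b) 0 j x = ∑ l, a 0 l x * b 0 (j - l) x := by
  simp only [mul_apply, ContinuousMap.sum_apply, ContinuousMap.mul_apply]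
  exact Finset.sum_congr rfl fun l _ ↦ by rw [hb.apply_eq_apply_zero_sub hx l j]

lemma star_apply_zero (ha : DPred p θ a) (hx : θ x = x) (j : ZMod p) :
    (star a) 0 j x = starRingEnd ℂ (a 0 (-j) x) := by
  rw [star_apply, ContinuousMap.star_apply, Complex.star_def, ha.apply_eq_apply_zero_sub hx,
    zero_sub]

end DPred

-- `π(a)_k(x)`; Mathlib's `𝓕` uses the character `j ↦ exp (-2πi jk/p)`, hence the argument `-k`.
variable (θ) in
noncomputable def fixedPointFourier (a : Matrix (ZMod p) (ZMod p) C(M, ℂ)) (k : ZMod p)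
    (x : {x : M // θ x = x}) : ℂ :=
  𝓕 (fun j ↦ a 0 j x.1) (-k)

lemma fixedPointFourier_add (a b : Matrix (ZMod p) (ZMod p) C(M, ℂ)) (k : ZMod p)
    (x : {x : M // θ x = x}) :
    fixedPointFourier θ (a + b) k x = fixedPointFourier θ a k x + fixedPointFourier θ b k x :=
  congr_fun (map_add 𝓕 (fun j ↦ a 0 j x.1) (fun j ↦ b 0 j x.1)) (-k)

lemma fixedPointFourier_smul (c : ℂ) (a : Matrix (ZMod p) (ZMod p) C(M, ℂ)) (k : ZMod p)
    (x : {x : M // θ x = x}) :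
    fixedPointFourier θ (c • a) k x = c * fixedPointFourier θ a k x :=
  congr_fun (map_smul 𝓕 c (fun j ↦ a 0 j x.1)) (-k)

lemma fixedPointFourier_mul (a : Matrix (ZMod p) (ZMod p) C(M, ℂ)) (hb : DPred p θ b)
    (k : ZMod p) (x : {x : M // θ x = x}) :
    fixedPointFourier θ (a * b) k x = fixedPointFourier θ a k x * fixedPointFourier θ b k x := by
  simp only [fixedPointFourier, hb.mul_apply_zero x.2]
  exact dft_convolution (fun j ↦ a 0 j x.1) (fun j ↦ b 0 j x.1) (-k)

lemma fixedPointFourier_star (ha : DPred p θ a) (k : ZMod p) (x : {x : M // θ x = x}) :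
    fixedPointFourier θ (star a) k x = starRingEnd ℂ (fixedPointFourier θ a k x) := by
  simp only [fixedPointFourier, ha.star_apply_zero x.2]
  exact dft_conj_neg (fun j ↦ a 0 j x.1) (-k)

lemma fixedPointFourier_one (k : ZMod p) (x : {x : M // θ x = x}) :
    fixedPointFourier θ 1 k x = 1 := by
  have : (fun j ↦ (1 : Matrix (ZMod p) (ZMod p) C(M, ℂ)) 0 j x.1) = Pi.single 0 1 := by
    ext j
    rcases eq_or_ne j 0 with rfl | hj
    · simp
    · simp [one_apply_ne hj.symm, hj]
  rw [fixedPointFourier, this, dft_single_zero_one]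

lemma fixedPointFourier_eq_zero_iff (ha : DPred p θ a) :
    (∀ k x, fixedPointFourier θ a k x = 0) ↔ ∀ i j x, θ x = x → a i j x = 0 := by
  have hrow (x : {x : M // θ x = x}) :
      (∀ k, fixedPointFourier θ a k x = 0) ↔ ∀ j, a 0 j x.1 = 0 := by
    have h := LinearEquiv.map_eq_zero_iff 𝓕 (x := fun j ↦ a 0 j x.1)
    simp only [funext_iff, Pi.zero_apply] at h
    rw [← h, neg_surjective.forall]
    simp only [fixedPointFourier, neg_neg]
  rw [forall_comm]
  simp only [hrow, Subtype.forall]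
  exact ⟨fun h i j x hx ↦ ha.apply_eq_apply_zero_sub hx i j ▸ h x hx _,
    fun h x hx j ↦ h 0 j x hx⟩

lemma exists_dPred_fixedPointFourier_eq [T4Space M] (hθc : Continuous θ)
    (hθ : ∀ x, θ^[p] x = x) (f : ZMod p → C({x : M // θ x = x}, ℂ)) :
    ∃ a, DPred p θ a ∧ ∀ k x, fixedPointFourier θ a k x = f k x := by
  have hclosed : IsClosed {x : M | θ x = x} := isClosed_eq hθc continuous_id
  choose h hh using fun j ↦ ContinuousMap.exists_restrict_eq hclosed (𝓕⁻ (f ∘ Neg.neg) j)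
  refine ⟨fun i j ↦ (h (j - i)).comp ⟨θ^[i.val], hθc.iterate _⟩, fun i j x ↦ ?_,
    fun k x ↦ ?_⟩
  · simp [add_sub_add_right_eq_sub, Function.iterate_val_add_one hθ]
  · have hrow : (fun j ↦ h (j - 0) (θ^[(0 : ZMod p).val] x.1)) =
        (ContinuousMap.evalCLM ℂ x : C({x : M // θ x = x}, ℂ) →L[ℂ] ℂ).toLinearMap ∘
          𝓕⁻ (f ∘ Neg.neg) := by
      ext j
      simp only [sub_zero, ZMod.val_zero, Function.iterate_zero_apply, Function.comp_apply,
        ← hh j]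
      rfl
    simp only [fixedPointFourier, ContinuousMap.comp_apply, ContinuousMap.coe_mk]
    rw [hrow, dft_comp_linearMap, Function.comp_apply, LinearEquiv.apply_symm_apply]
    simp

end FixedPoints

theorem stmt_3_general {M : Type*} [TopologicalSpace M] [CompactSpace M] [T2Space M]
    (p : ℕ) [NeZero p] (θ : M ≃ₜ M) (hθ : ∀ x, (⇑θ)^[p] x = x)
    (ω : ℂ) (hω : ω = Complex.exp (2 * Real.pi * Complex.I / p))
    (π' : Matrix (ZMod p) (ZMod p) C(M, ℂ) → ZMod p → {x : M // θ x = x} → ℂ)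
    (hπ : ∀ a k x, π' a k x = ∑ j : ZMod p, ω ^ (j * k).val * a 0 j x.1) :
    -- π is a unital star-algebra homomorphism on D(M,θ):
    ((∀ a b, DPred p θ a → DPred p θ b →
        ∀ k x, π' (a + b) k x = π' a k x + π' b k x) ∧
     (∀ a b, DPred p θ a → DPred p θ b →
        ∀ k x, π' (a * b) k x = π' a k x * π' b k x) ∧
     (∀ (c : ℂ) a, DPred p θ a → ∀ k x, π' (c • a) k x = c * π' a k x) ∧
     (∀ a, DPred p θ a → ∀ k x, π' (star a) k x = starRingEnd ℂ (π' a k x)) ∧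
     (∀ k x, π' 1 k x = 1)) ∧
    -- π is surjective onto ∏_{k ∈ ℤ/pℤ} C(M_θ, ℂ):
    (∀ f : ZMod p → C({x : M // θ x = x}, ℂ),
      ∃ a, DPred p θ a ∧ ∀ k x, π' a k x = f k x) ∧
    -- the kernel of π is exactly D(M₀,θ):
    (∀ a, DPred p θ a →
      ((∀ k x, π' a k x = 0) ↔ ∀ i j : ZMod p, ∀ x : M, θ x = x → a i j x = 0)) := by
  obtain rfl : π' = fixedPointFourier θ := by
    ext a k x
    simp only [hπ, fixedPointFourier, dft_apply, mul_neg, neg_neg, smul_eq_mul,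
      pow_val_eq_stdAddChar hω]
  exact ⟨⟨fun a b _ _ ↦ fixedPointFourier_add a b,
      fun a _ _ hb ↦ fixedPointFourier_mul a hb,
      fun c a _ ↦ fixedPointFourier_smul c a,
      fun _ ha ↦ fixedPointFourier_star ha,
      fixedPointFourier_one⟩,
    exists_dPred_fixedPointFourier_eq θ.continuous hθ,
    fun _ ha ↦ fixedPointFourier_eq_zero_iff ha⟩

/-- the map `π : D(M,θ) → ∏_{k ∈ ℤ/pℤ} C(M_θ, ℂ)`, whose `k`-th component of
`π(a)` is `x ↦ ∑_j ω^{jk} a_{0,j}(x)` restricted to `M_θ`, is a surjective unital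
star-algebra homomorphism with kernel `D(M₀,θ) = {a ∈ D(M,θ) : a|_{M_θ} = 0}`. -/
theorem stmt_3 {M : Type*} [TopologicalSpace M] [CompactSpace M] [T2Space M]
    (p : ℕ) (hp : p.Prime) [NeZero p] (θ : M ≃ₜ M) (hθ : ∀ x, (⇑θ)^[p] x = x)
    (ω : ℂ) (hω : ω = Complex.exp (2 * Real.pi * Complex.I / p))
    (π' : Matrix (ZMod p) (ZMod p) C(M, ℂ) → ZMod p → {x : M // θ x = x} → ℂ)
    (hπ : ∀ a k x, π' a k x = ∑ j : ZMod p, ω ^ (j * k).val * a 0 j x.1) :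
    -- π is a unital star-algebra homomorphism on D(M,θ):
    ((∀ a b, DPred p θ a → DPred p θ b →
        ∀ k x, π' (a + b) k x = π' a k x + π' b k x) ∧
     (∀ a b, DPred p θ a → DPred p θ b →
        ∀ k x, π' (a * b) k x = π' a k x * π' b k x) ∧
     (∀ (c : ℂ) a, DPred p θ a → ∀ k x, π' (c • a) k x = c * π' a k x) ∧
     (∀ a, DPred p θ a → ∀ k x, π' (star a) k x = starRingEnd ℂ (π' a k x)) ∧
     (∀ k x, π' 1 k x = 1)) ∧
    -- π is surjective onto ∏_{k ∈ ℤ/pℤ} C(M_θ, ℂ):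
    (∀ f : ZMod p → C({x : M // θ x = x}, ℂ),
      ∃ a, DPred p θ a ∧ ∀ k x, π' a k x = f k x) ∧
    -- the kernel of π is exactly D(M₀,θ):
    (∀ a, DPred p θ a →
      ((∀ k x, π' a k x = 0) ↔ ∀ i j : ZMod p, ∀ x : M, θ x = x → a i j x = 0)) :=
  stmt_3_general p θ hθ ω hω π' hπ
end

section
/- Let x₀ ∈ M with θ(x₀) ≠ x₀. Then the evaluation map a ↦ (a_{i,j}(x₀))_{i,j∈ℤ/pℤ} maps D(M₀,θ) onto all of M_p(ℂ); that is, for every matrix A ∈ M_p(ℂ) there exists a ∈ D(M,θ) whose entries all vanish on M_θ and such that a_{i,j}(x₀) = A_{i,j} for all i,j. -/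
/-!
Take a Urysohn function `φ` equal to `1` at `x₀` and to `0` on `M_θ` and at the other points
`θ^k x₀` (`k ≠ 0`) of the orbit of `x₀`; these points differ from `x₀` because `p` is prime.
Averaging `A` along the orbit, `a_{i,j} = ∑_k A_{i-k,j-k} · (φ ∘ θ^k)`, gives an element of
`D(M,θ)` that vanishes on `M_θ` and evaluates to `A` at `x₀`.
-/

open Matrix

open Function

section Periodic

variable {α : Type*} {f : α → α} {n : ℕ}

theorem Function.IsPeriodicPt.iterate_zmod_val_natCast {x : α} (hx : IsPeriodicPt f n x) (m : ℕ) :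
    f^[(m : ZMod n).val] x = f^[m] x := by
  rw [ZMod.val_natCast, hx.iterate_mod_apply]

theorem Function.IsPeriodicPt.iterate_zmod_val_add_one [NeZero n] {x : α} (hx : IsPeriodicPt f n x)
    (k : ZMod n) : f^[(k + 1).val] x = f^[k.val] (f x) := by
  have hk : k + 1 = ((k.val + 1 : ℕ) : ZMod n) := by
    push_cast [ZMod.natCast_zmod_val]
    rfl
  rw [hk, hx.iterate_zmod_val_natCast, iterate_succ_apply]

theorem eq_zero_of_iterate_zmod_val_eq {x : α} (hn : n.Prime) (hx : IsPeriodicPt f n x)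
    (hfx : ¬IsFixedPt f x) {k : ZMod n} (hk : f^[k.val] x = x) : k = 0 := by
  have : NeZero n := ⟨hn.ne_zero⟩
  have hperiod : minimalPeriod f x = n :=
    (hn.eq_one_or_self_of_dvd _ hx.minimalPeriod_dvd).resolve_left
      (mt minimalPeriod_eq_one_iff_isFixedPt.mp hfx)
  have hdvd : minimalPeriod f x ∣ k.val := IsPeriodicPt.minimalPeriod_dvd hk
  rw [hperiod] at hdvd
  exact (ZMod.val_eq_zero k).mp (Nat.eq_zero_of_dvd_of_lt hdvd (ZMod.val_lt k))

end Periodic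

section OrbitMatrix

variable {M : Type*} [TopologicalSpace M] {p : ℕ} [NeZero p]

noncomputable def orbitMatrix (θ : C(M, M)) (A : Matrix (ZMod p) (ZMod p) ℂ) (φ : C(M, ℂ)) :
    Matrix (ZMod p) (ZMod p) C(M, ℂ) :=
  of fun i j => ∑ k : ZMod p, A (i - k) (j - k) • φ.comp ⟨θ^[k.val], θ.continuous.iterate _⟩

variable {θ : C(M, M)} {A : Matrix (ZMod p) (ZMod p) ℂ} {φ : C(M, ℂ)}

theorem orbitMatrix_apply (i j : ZMod p) (x : M) :
    orbitMatrix θ A φ i j x = ∑ k : ZMod p, A (i - k) (j - k) * φ (θ^[k.val] x) := by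
  simp [orbitMatrix]

theorem dPred_orbitMatrix (hθ : ∀ x, IsPeriodicPt θ p x) : DPred p θ (orbitMatrix θ A φ) := by
  intro i j x
  simp only [orbitMatrix_apply]
  refine (Fintype.sum_equiv (Equiv.addRight 1) _ _ fun k => ?_).symm
  simp only [Equiv.coe_addRight, (hθ x).iterate_zmod_val_add_one, add_sub_add_right_eq_sub]

theorem orbitMatrix_apply_eq_zero_of_isFixedPt {x : M} (hx : IsFixedPt θ x) (hφ : φ x = 0)
    (i j : ZMod p) : orbitMatrix θ A φ i j x = 0 := by
  simp [orbitMatrix_apply, iterate_fixed hx, hφ]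

theorem orbitMatrix_apply_eq {x : M} (hφx : φ x = 1)
    (hφ : ∀ k : ZMod p, k ≠ 0 → φ (θ^[k.val] x) = 0) (i j : ZMod p) :
    orbitMatrix θ A φ i j x = A i j := by
  rw [orbitMatrix_apply, Finset.sum_eq_single (0 : ZMod p)]
  · simp [hφx]
  · intro k _ hk
    simp [hφ k hk]
  · simp

end OrbitMatrix

theorem exists_bump_vanishing_on_fixedPts_and_orbit {M : Type*} [TopologicalSpace M]
    [CompactSpace M] [T2Space M] {p : ℕ} (hp : p.Prime) {θ : C(M, M)}
    (hθ : ∀ x, IsPeriodicPt θ p x) {x₀ : M} (hx₀ : ¬IsFixedPt θ x₀) :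
    ∃ φ : C(M, ℂ), φ x₀ = 1 ∧ (∀ x, IsFixedPt θ x → φ x = 0) ∧
      ∀ k : ZMod p, k ≠ 0 → φ (θ^[k.val] x₀) = 0 := by
  have : NeZero p := ⟨hp.ne_zero⟩
  set K : Set M := {x | IsFixedPt θ x} ∪ (fun k : ZMod p => θ^[k.val] x₀) '' {0}ᶜ
  have hK : IsClosed K :=
    (isClosed_eq θ.continuous continuous_id).union (Set.toFinite _).isClosed
  have hx₀K : x₀ ∉ K := by
    rintro (hfix | ⟨k, hk, hkx⟩)
    · exact hx₀ hfix
    · exact hk (eq_zero_of_iterate_zmod_val_eq hp (hθ x₀) hx₀ hkx)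
  obtain ⟨f, hfK, hfx₀, -⟩ := exists_continuous_zero_one_of_isClosed hK isClosed_singleton
    (Set.disjoint_singleton_right.mpr hx₀K)
  refine ⟨⟨fun x => (f x : ℂ), by fun_prop⟩, ?_, fun x hx => ?_, fun k hk => ?_⟩
  · simp [hfx₀ rfl]
  · simp [hfK (Or.inl hx)]
  · simp [hfK (Or.inr ⟨k, hk, rfl⟩)]

/-- if `θ x₀ ≠ x₀`, evaluation at `x₀` maps `D(M₀,θ)` onto `M_p(ℂ)`:
for every `A ∈ M_p(ℂ)` there is `a ∈ D(M,θ)` vanishing (entrywise) on `M_θ`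
with `a_{i,j}(x₀) = A_{i,j}`. -/
theorem stmt_5 {M : Type*} [TopologicalSpace M] [CompactSpace M] [T2Space M]
    (p : ℕ) (hp : p.Prime) [NeZero p] (θ : M ≃ₜ M) (hθ : ∀ x, (⇑θ)^[p] x = x)
    (x₀ : M) (hx₀ : θ x₀ ≠ x₀) (A : Matrix (ZMod p) (ZMod p) ℂ) :
    ∃ a : Matrix (ZMod p) (ZMod p) C(M, ℂ), DPred p θ a ∧
      (∀ i j : ZMod p, ∀ x : M, θ x = x → a i j x = 0) ∧
      (∀ i j : ZMod p, a i j x₀ = A i j) := by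
  let θc : C(M, M) := θ
  obtain ⟨φ, hφx₀, hφfix, hφorbit⟩ :=
    exists_bump_vanishing_on_fixedPts_and_orbit (θ := θc) hp hθ hx₀
  exact ⟨orbitMatrix θc A φ, dPred_orbitMatrix hθ,
    fun i j x hx => orbitMatrix_apply_eq_zero_of_isFixedPt (θ := θc) hx (hφfix x hx) i j,
    orbitMatrix_apply_eq hφx₀ hφorbit⟩
end

section
/- Let x₀, x₁ ∈ M satisfy θ(x₀) ≠ x₀, θ(x₁) ≠ x₁, and x₁ ∉ {θ^j(x₀) : 0 ≤ j ≤ p−1}. Then there exists a ∈ D(M,θ) whose entries all vanish on M_θ, such that a_{i,j}(x₀) = 0 for all i,j while a_{i,j}(x₁) ≠ 0 for some i,j. -/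
/-
A point outside a closed set can be separated from it by a continuous function,
so pick `g ∈ C(M, ℂ)` vanishing on `M_θ` and on the (finite) orbit of `x₀`, with `g x₁ = 1`.
The diagonal matrix with entries `g ∘ θ^i`, `i ∈ ℤ/pℤ`, lies in `D(M,θ)` because `θ^p = id`,
and its entries at a point `x` only involve the values of `g` on the orbit of `x`.
-/

open Matrix

open Set

theorem exists_continuousMap_complex_eqOn_zero_of_notMem {M : Type*} [TopologicalSpace M]
    [CompletelyRegularSpace M] {K : Set M} (hK : IsClosed K) {x : M} (hx : x ∉ K) :
    ∃ g : C(M, ℂ), EqOn g 0 K ∧ g x = 1 := by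
  obtain ⟨f, hf, hfx, hfK⟩ := CompletelyRegularSpace.completely_regular x K hK hx
  refine ⟨⟨fun y => 1 - ((f y : ℝ) : ℂ), by fun_prop⟩, fun y hy => ?_, by simp [hfx]⟩
  simp [hfK hy]

theorem Function.iterate_zmod_val_add_one {M : Type*} {p : ℕ} [NeZero p] {θ : M → M}
    (hθ : ∀ x, θ^[p] x = x) (i : ZMod p) (x : M) :
    θ^[(i + 1).val] x = θ^[i.val] (θ x) := by
  rw [ZMod.val_add, ZMod.val_one_eq_one_mod, Nat.add_mod_mod,
    Function.IsPeriodicPt.iterate_mod_apply (hθ x), Function.iterate_succ_apply]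

section DPred

variable {M : Type*} [TopologicalSpace M] {p : ℕ} {θ : M → M}

theorem dPred_diagonal {F : ZMod p → C(M, ℂ)} (hF : ∀ i x, F (i + 1) x = F i (θ x)) :
    DPred p θ (diagonal F) := by
  intro i j x
  by_cases h : i = j
  · simp [h, hF]
  · simp [diagonal_apply_ne _ h, diagonal_apply_ne _ (add_right_cancel.mt h)]

theorem dPred_diagonal_comp_iterate [NeZero p] (hθc : Continuous θ) (hθ : ∀ x, θ^[p] x = x)
    (g : C(M, ℂ)) :
    DPred p θ (diagonal fun i : ZMod p => g.comp ⟨θ^[i.val], hθc.iterate _⟩) :=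
  dPred_diagonal fun i x => by simp [Function.iterate_zmod_val_add_one hθ]

end DPred

theorem Matrix.diagonal_apply_eq_zero {ι M R : Type*} [DecidableEq ι] [TopologicalSpace M]
    [TopologicalSpace R] [Zero R] {F : ι → C(M, R)} {x : M} (hF : ∀ i, F i x = 0) (i j : ι) :
    diagonal F i j x = 0 := by
  by_cases h : i = j
  · simp [h, hF]
  · simp [diagonal_apply_ne _ h]

theorem stmt_7_general {M : Type*} [TopologicalSpace M] [CompactSpace M] [T2Space M]
    (p : ℕ) [NeZero p] (θ : M ≃ₜ M) (hθ : ∀ x, (⇑θ)^[p] x = x)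
    (x₀ x₁ : M) (hx₁ : θ x₁ ≠ x₁)
    (horb : ∀ j : ℕ, j ≤ p - 1 → (⇑θ)^[j] x₀ ≠ x₁) :
    ∃ a : Matrix (ZMod p) (ZMod p) C(M, ℂ), DPred p θ a ∧
      (∀ i j : ZMod p, ∀ x : M, θ x = x → a i j x = 0) ∧
      (∀ i j : ZMod p, a i j x₀ = 0) ∧
      (∃ i j : ZMod p, a i j x₁ ≠ 0) := by
  set K : Set M := {x | θ x = x} ∪ range fun i : ZMod p => (⇑θ)^[i.val] x₀
  have hK : IsClosed K :=
    (isClosed_eq θ.continuous continuous_id).union (finite_range _).isClosed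
  have hx₁K : x₁ ∉ K := by
    rintro (hfix | ⟨i, hi⟩)
    · exact hx₁ hfix
    · exact horb i.val (Nat.le_sub_one_of_lt i.val_lt) hi
  obtain ⟨g, hgK, hgx₁⟩ := exists_continuousMap_complex_eqOn_zero_of_notMem hK hx₁K
  refine ⟨_, dPred_diagonal_comp_iterate θ.continuous hθ g, ?_, ?_, ⟨0, 0, ?_⟩⟩
  · intro i j x hx
    refine diagonal_apply_eq_zero (fun k => ?_) i j
    simpa [Function.iterate_fixed hx] using hgK (Or.inl hx)
  · exact diagonal_apply_eq_zero fun k => hgK (Or.inr ⟨k, rfl⟩)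
  · simp [hgx₁]

/-- if `x₀, x₁` are non-fixed points of `θ` with `x₁` not in the
`θ`-orbit of `x₀`, then there is `a ∈ D(M,θ)` vanishing entrywise on `M_θ`
with `a(x₀) = 0` but `a(x₁) ≠ 0`. -/
theorem stmt_7 {M : Type*} [TopologicalSpace M] [CompactSpace M] [T2Space M]
    (p : ℕ) (hp : p.Prime) [NeZero p] (θ : M ≃ₜ M) (hθ : ∀ x, (⇑θ)^[p] x = x)
    (x₀ x₁ : M) (hx₀ : θ x₀ ≠ x₀) (hx₁ : θ x₁ ≠ x₁)
    (horb : ∀ j : ℕ, j ≤ p - 1 → (⇑θ)^[j] x₀ ≠ x₁) :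
    ∃ a : Matrix (ZMod p) (ZMod p) C(M, ℂ), DPred p θ a ∧
      (∀ i j : ZMod p, ∀ x : M, θ x = x → a i j x = 0) ∧
      (∀ i j : ZMod p, a i j x₀ = 0) ∧
      (∃ i j : ZMod p, a i j x₁ ≠ 0) :=
  stmt_7_general p θ hθ x₀ x₁ hx₁ horb
end

section
/- For every x₀ ∈ M_θ and every k ∈ ℤ/pℤ, the functional σ_{x₀,k} : D(M,θ) → ℂ defined by σ_{x₀,k}(a) = Σ_{j∈ℤ/pℤ} ω^{jk} a_{0,j}(x₀) is a unital star-algebra homomorphism (a character) of D(M,θ). -/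
/-!
At a fixed point `x₀` of `θ`, the defining relation of `D(M,θ)` says that the scalar matrix
`a(x₀) = (a_{ij}(x₀))` is invariant under the diagonal shift `(i, j) ↦ (i + 1, j + 1)`, so it is
circulant: `a_{ij}(x₀) = a_{0,j-i}(x₀)`. The first row of a product of circulant matrices is the
convolution of their first rows, and `σ_{x₀,k}` is the Fourier coefficient of that first row at the
additive character `j ↦ ω^{jk}` of `ℤ/pℤ`, which turns convolution into multiplication,
the conjugate transpose into complex conjugation, and the identity matrix into `1`.
-/

open Matrix ComplexConjugate

namespace Matrix

variable {G R : Type*} [AddCommGroup G]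

def IsShiftInvariant (A : Matrix G G R) : Prop :=
  ∀ g i j, A (i + g) (j + g) = A i j

theorem IsShiftInvariant.apply_eq {A : Matrix G G R} (hA : A.IsShiftInvariant) (i j : G) :
    A i j = A 0 (j - i) := by
  simpa [sub_eq_add_neg] using (hA (-i) i j).symm

theorem isShiftInvariant_of_succ {n : ℕ} [NeZero n] {A : Matrix (ZMod n) (ZMod n) R}
    (hA : ∀ i j, A (i + 1) (j + 1) = A i j) : A.IsShiftInvariant := by
  intro g
  obtain ⟨m, rfl⟩ := ZMod.natCast_zmod_surjective g
  induction m with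
  | zero => simp
  | succ m ih =>
    intro i j
    rw [Nat.cast_succ, ← add_assoc, ← add_assoc, hA, ih]

variable [Fintype G] [CommRing R]

def fourierFirstRow (ψ : AddChar G R) : Matrix G G R →ₗ[R] R where
  toFun A := ∑ j, ψ j * A 0 j
  map_add' A B := by simp only [add_apply, mul_add, Finset.sum_add_distrib]
  map_smul' c A := by
    simp only [smul_apply, smul_eq_mul, Finset.mul_sum, RingHom.id_apply, mul_left_comm]

theorem fourierFirstRow_apply (ψ : AddChar G R) (A : Matrix G G R) :
    fourierFirstRow ψ A = ∑ j, ψ j * A 0 j :=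
  rfl

theorem fourierFirstRow_conjTranspose (ψ : AddChar G ℂ) {A : Matrix G G ℂ}
    (hA : A.IsShiftInvariant) : fourierFirstRow ψ Aᴴ = conj (fourierFirstRow ψ A) := by
  simp only [fourierFirstRow_apply, conjTranspose_apply, map_sum, map_mul]
  rw [← Equiv.sum_comp (Equiv.neg G)]
  refine Finset.sum_congr rfl fun j _ => ?_
  rw [Equiv.neg_apply, hA.apply_eq, AddChar.map_neg_eq_conj, zero_sub, neg_neg]
  rfl

variable (ψ : AddChar G R)

theorem fourierFirstRow_mul (A : Matrix G G R) {B : Matrix G G R} (hB : B.IsShiftInvariant) :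
    fourierFirstRow ψ (A * B) = fourierFirstRow ψ A * fourierFirstRow ψ B := by
  rw [fourierFirstRow_apply, fourierFirstRow_apply, fourierFirstRow_apply, Finset.sum_mul_sum]
  simp only [mul_apply, Finset.mul_sum]
  rw [Finset.sum_comm]
  refine Finset.sum_congr rfl fun l _ => ?_
  rw [← Equiv.sum_comp (Equiv.addLeft l)]
  refine Finset.sum_congr rfl fun m _ => ?_
  rw [Equiv.coe_addLeft, hB.apply_eq l, add_sub_cancel_left, AddChar.map_add_eq_mul]
  ring

theorem fourierFirstRow_one [DecidableEq G] : fourierFirstRow ψ (1 : Matrix G G R) = 1 := by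
  simp [fourierFirstRow_apply, one_apply]

end Matrix

theorem DPred.isShiftInvariant_map_eval {M : Type*} [TopologicalSpace M] {p : ℕ} [NeZero p]
    {θ : M → M} {a : Matrix (ZMod p) (ZMod p) C(M, ℂ)} (ha : DPred p θ a) {x₀ : M}
    (hx₀ : θ x₀ = x₀) : (a.map fun f => f x₀).IsShiftInvariant :=
  isShiftInvariant_of_succ fun i j => by simp only [map_apply, ha i j x₀, hx₀]

theorem stmt_8_general {M : Type*} [TopologicalSpace M]
    (p : ℕ) [NeZero p] (θ : M ≃ₜ M)
    (ω : ℂ) (hω : ω = Complex.exp (2 * Real.pi * Complex.I / p))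
    (x₀ : M) (hx₀ : θ x₀ = x₀) (k : ZMod p)
    (σ : Matrix (ZMod p) (ZMod p) C(M, ℂ) → ℂ)
    (hσ : ∀ a, σ a = ∑ j : ZMod p, ω ^ (j * k).val * a 0 j x₀) :
    (∀ a b, DPred p θ a → DPred p θ b → σ (a + b) = σ a + σ b) ∧
    (∀ a b, DPred p θ a → DPred p θ b → σ (a * b) = σ a * σ b) ∧
    (∀ (c : ℂ) a, DPred p θ a → σ (c • a) = c * σ a) ∧
    (∀ a, DPred p θ a → σ (star a) = starRingEnd ℂ (σ a)) ∧
    σ 1 = 1 := by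
  have hωp : ω ^ p = 1 := hω ▸ (Complex.isPrimitiveRoot_exp p (NeZero.ne p)).pow_eq_one
  let ev := (ContinuousMap.evalStarAlgHom ℂ ℂ x₀ : C(M, ℂ) →ₐ[ℂ] ℂ).mapMatrix (m := ZMod p)
  let ψ := (AddChar.zmodChar p hωp).mulShift k
  have hσ_eq : ∀ a, σ a = fourierFirstRow ψ (ev a) := fun a => by
    simp [hσ, fourierFirstRow_apply, ψ, ev, AddChar.zmodChar_apply, mul_comm k]
  have hev_star : ∀ a, ev (star a) = (ev a)ᴴ := fun a =>
    conjTranspose_map _ fun f => map_star (ContinuousMap.evalStarAlgHom ℂ ℂ x₀) f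
  have hev_inv : ∀ a, DPred p θ a → (ev a).IsShiftInvariant := fun a ha =>
    ha.isShiftInvariant_map_eval hx₀
  refine ⟨fun a b _ _ => ?_, fun a b _ hb => ?_, fun c a _ => ?_, fun a ha => ?_, ?_⟩
  · simp only [hσ_eq, map_add]
  · rw [hσ_eq, hσ_eq, hσ_eq, map_mul, fourierFirstRow_mul _ _ (hev_inv b hb)]
  · rw [hσ_eq, hσ_eq, map_smul, map_smul, smul_eq_mul]
  · rw [hσ_eq, hσ_eq, hev_star, fourierFirstRow_conjTranspose _ (hev_inv a ha)]
  · rw [hσ_eq, map_one, fourierFirstRow_one]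

/-- for `x₀ ∈ M_θ` and `k ∈ ℤ/pℤ`, the functional
`σ_{x₀,k}(a) = ∑_j ω^{jk} a_{0,j}(x₀)` is a unital star-algebra homomorphism
(character) on `D(M,θ)`. -/
theorem stmt_8 {M : Type*} [TopologicalSpace M] [CompactSpace M] [T2Space M]
    (p : ℕ) (hp : p.Prime) [NeZero p] (θ : M ≃ₜ M) (hθ : ∀ x, (⇑θ)^[p] x = x)
    (ω : ℂ) (hω : ω = Complex.exp (2 * Real.pi * Complex.I / p))
    (x₀ : M) (hx₀ : θ x₀ = x₀) (k : ZMod p)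
    (σ : Matrix (ZMod p) (ZMod p) C(M, ℂ) → ℂ)
    (hσ : ∀ a, σ a = ∑ j : ZMod p, ω ^ (j * k).val * a 0 j x₀) :
    (∀ a b, DPred p θ a → DPred p θ b → σ (a + b) = σ a + σ b) ∧
    (∀ a b, DPred p θ a → DPred p θ b → σ (a * b) = σ a * σ b) ∧
    (∀ (c : ℂ) a, DPred p θ a → σ (c • a) = c * σ a) ∧
    (∀ a, DPred p θ a → σ (star a) = starRingEnd ℂ (σ a)) ∧
    σ 1 = 1 :=
  stmt_8_general p θ ω hω x₀ hx₀ k σ hσ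
end

section
/- Regard each P_k = Ω_p* e_k Ω_p as a constant matrix in M_p(C(M,ℂ)). For every a ∈ D(M,θ) and every k ∈ ℤ/pℤ, there exists a continuous function g : M → ℂ with g ∘ θ = g such that P_k · a · P_k = g · P_k (pointwise scalar multiple); explicitly one may take g(x) = (Ω_p (a_{i,j}(x))_{i,j} Ω_p*)_{k,k}. In particular, the compression P_k D(M,θ) P_k is a commutative algebra. -/
/-!
`P_k = Ω* e_k Ω` is the rank-one matrix `vecMulVec (star r) r`, where `r` is the `k`-th row
of `Ω`. Over any commutative ring, `P a P = (r ⬝ᵥ a *ᵥ star r) • P` for such a `P`, so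
compressions by `P` are scalar multiples of `P` and commute, and the scalar is `(Ω a Ω*)_{kk}`.
The row satisfies `r (s + 1) = ω ^ k * r s` with `|ω ^ k| = 1`, so replacing `a` by its shift
`a_{i+1,j+1} = a_{i,j} ∘ θ` does not change the scalar: it is `θ`-invariant.
-/

open Matrix

namespace Matrix

variable {n R : Type*} [Fintype n]

theorem vecMulVec_mul_mul_vecMulVec [CommSemiring R] (u w : n → R) (A : Matrix n n R) :
    vecMulVec u w * A * vecMulVec u w = (w ⬝ᵥ A *ᵥ u) • vecMulVec u w := by
  rw [Matrix.mul_assoc, mul_vecMulVec, vecMulVec_mul_vecMulVec, vecMulVec_smul]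

theorem conjTranspose_mul_single_mul [DecidableEq n] [Semiring R] [Star R]
    (A : Matrix n n R) (k : n) :
    Aᴴ * single k k 1 * A = vecMulVec (star (A k)) (A k) := by
  ext i j
  simp [mul_apply, single, vecMulVec_apply, ite_and]

theorem dotProduct_submatrix_mulVec_of_comp_eq_smul [CommSemiring R] (e : n ≃ n)
    {u w : n → R} {c d : R} (hcd : c * d = 1) (hu : u ∘ e = c • u) (hw : w ∘ e = d • w)
    (A : Matrix n n R) : u ⬝ᵥ A.submatrix e e *ᵥ w = u ⬝ᵥ A *ᵥ w := by
  calc u ⬝ᵥ A.submatrix e e *ᵥ w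
      = c * d * (u ⬝ᵥ A.submatrix e e *ᵥ w) := by rw [hcd, one_mul]
    _ = u ∘ e ⬝ᵥ A.submatrix e e *ᵥ (w ∘ e) := by
      rw [hu, hw, mulVec_smul, smul_dotProduct, dotProduct_smul, smul_eq_mul, smul_eq_mul,
        mul_assoc]
    _ = u ⬝ᵥ A *ᵥ w := by
      rw [submatrix_mulVec_equiv, ← dotProduct_comp_equiv_symm]
      simp [Function.comp_def]

theorem commute_vecMulVec_mul_mul_vecMulVec [CommSemiring R] (u w : n → R) (A B : Matrix n n R) :
    Commute (vecMulVec u w * A * vecMulVec u w) (vecMulVec u w * B * vecMulVec u w) := by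
  simp only [vecMulVec_mul_mul_vecMulVec]
  exact ((Commute.refl _).smul_left _).smul_right _

end Matrix

namespace ZMod

variable {M : Type*} [Monoid M] {p : ℕ} {ζ : M}

theorem pow_val_add_of_pow_eq_one [NeZero p] (hζ : ζ ^ p = 1) (s t : ZMod p) :
    ζ ^ (s + t).val = ζ ^ s.val * ζ ^ t.val := by
  rw [val_add, ← pow_eq_pow_mod _ hζ, pow_add]

theorem pow_val_mul_of_pow_eq_one (hζ : ζ ^ p = 1) (s t : ZMod p) :
    ζ ^ (s * t).val = ζ ^ (s.val * t.val) := by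
  rw [val_mul, ← pow_eq_pow_mod _ hζ]

end ZMod

theorem dft_apply_add_one {K : Type*} [Field K] {p : ℕ} [NeZero p] {ω c : K} (hω : ω ^ p = 1)
    {Ω : Matrix (ZMod p) (ZMod p) K} (hΩ : ∀ j k : ZMod p, Ω j k = ω ^ (j.val * k.val) / c)
    (k s : ZMod p) : Ω k (s + 1) = ω ^ k.val * Ω k s := by
  rw [hΩ, hΩ, ← ZMod.pow_val_mul_of_pow_eq_one hω, ← ZMod.pow_val_mul_of_pow_eq_one hω,
    mul_add, mul_one, ZMod.pow_val_add_of_pow_eq_one hω, mul_comm, mul_div_assoc]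

theorem stmt_10_general {M : Type*} [TopologicalSpace M]
    (p : ℕ) [NeZero p] (θ : M ≃ₜ M)
    (ω : ℂ) (hω : ω = Complex.exp (2 * Real.pi * Complex.I / p))
    (Ω : Matrix (ZMod p) (ZMod p) ℂ)
    (hΩ : ∀ j k : ZMod p, Ω j k = ω ^ (j.val * k.val) / (Real.sqrt p : ℂ))
    (P : ZMod p → Matrix (ZMod p) (ZMod p) ℂ)
    (hP : ∀ k : ZMod p, P k = Ωᴴ * Matrix.single k k 1 * Ω)
    (Pc : ZMod p → Matrix (ZMod p) (ZMod p) C(M, ℂ))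
    (hPc : ∀ k i j : ZMod p, Pc k i j = ContinuousMap.const M (P k i j)) :
    ∀ a, DPred p θ a → ∀ k : ZMod p,
      (∃ g : C(M, ℂ), (∀ x, g (θ x) = g x) ∧
        (∀ x, g x = (Ω * (Matrix.of fun i j : ZMod p => a i j x) * Ωᴴ) k k) ∧
        (∀ i j : ZMod p, ∀ x : M, (Pc k * a * Pc k) i j x = g x * P k i j)) ∧
      (∀ b, DPred p θ b →
        (Pc k * a * Pc k) * (Pc k * b * Pc k) = (Pc k * b * Pc k) * (Pc k * a * Pc k)) := by
  intro a ha k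
  have hprim : IsPrimitiveRoot ω p := hω ▸ Complex.isPrimitiveRoot_exp p (NeZero.ne p)
  set c := ω ^ k.val
  have hc : c * star c = 1 := by
    rw [Complex.star_def, Complex.mul_conj', norm_pow, hprim.norm'_eq_one (NeZero.ne p)]
    norm_num
  have hrow : Ω k ∘ Equiv.addRight 1 = c • Ω k :=
    funext (dft_apply_add_one hprim.pow_eq_one hΩ k)
  have hrow_star : star (Ω k) ∘ Equiv.addRight 1 = star c • star (Ω k) := by
    rw [← star_smul, ← hrow]
    rfl
  set u : ZMod p → C(M, ℂ) := fun i => .const M (star (Ω k) i)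
  set w : ZMod p → C(M, ℂ) := fun j => .const M (Ω k j)
  have hPc_eq : Pc k = vecMulVec u w := by
    ext i j : 2
    rw [hPc, hP, conjTranspose_mul_single_mul]
    rfl
  have hcompress : ∀ a, Pc k * a * Pc k = (w ⬝ᵥ a *ᵥ u) • Pc k := fun a => by
    rw [hPc_eq, vecMulVec_mul_mul_vecMulVec]
  set g := w ⬝ᵥ a *ᵥ u
  have hg : ∀ x, g x = Ω k ⬝ᵥ (Matrix.of fun i j => a i j x) *ᵥ star (Ω k) := fun x => by
    simp [g, u, w, dotProduct, mulVec, ContinuousMap.sum_apply]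
  refine ⟨⟨g, fun x => ?_, fun x => ?_, fun i j x => ?_⟩, fun b _ => ?_⟩
  · have hshift : (Matrix.of fun i j => a i j (θ x)) =
        (Matrix.of fun i j => a i j x).submatrix (Equiv.addRight 1) (Equiv.addRight 1) := by
      ext i j
      exact (ha i j x).symm
    rw [hg, hg, hshift, dotProduct_submatrix_mulVec_of_comp_eq_smul _ hc hrow hrow_star]
  · rw [hg, mul_mul_apply]
    rfl
  · rw [hcompress, Matrix.smul_apply, smul_eq_mul, ContinuousMap.mul_apply, hPc,
      ContinuousMap.const_apply]
  · rw [hPc_eq]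
    exact commute_vecMulVec_mul_mul_vecMulVec u w a b

/-- regarding each `P_k = Ω_p* e_k Ω_p` as a constant matrix in
`M_p(C(M,ℂ))`, for every `a ∈ D(M,θ)` the compression `P_k a P_k` is a scalar
multiple `g · P_k` with `g` continuous and `θ`-invariant, explicitly
`g(x) = (Ω_p a(x) Ω_p*)_{k,k}`; in particular `P_k D(M,θ) P_k` is commutative. -/
theorem stmt_10 {M : Type*} [TopologicalSpace M] [CompactSpace M] [T2Space M]
    (p : ℕ) (hp : 2 ≤ p) [NeZero p] (θ : M ≃ₜ M) (hθ : ∀ x, (⇑θ)^[p] x = x)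
    (ω : ℂ) (hω : ω = Complex.exp (2 * Real.pi * Complex.I / p))
    (Ω : Matrix (ZMod p) (ZMod p) ℂ)
    (hΩ : ∀ j k : ZMod p, Ω j k = ω ^ (j.val * k.val) / (Real.sqrt p : ℂ))
    (P : ZMod p → Matrix (ZMod p) (ZMod p) ℂ)
    (hP : ∀ k : ZMod p, P k = Ωᴴ * Matrix.single k k 1 * Ω)
    (Pc : ZMod p → Matrix (ZMod p) (ZMod p) C(M, ℂ))
    (hPc : ∀ k i j : ZMod p, Pc k i j = ContinuousMap.const M (P k i j)) :
    ∀ a, DPred p θ a → ∀ k : ZMod p,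
      (∃ g : C(M, ℂ), (∀ x, g (θ x) = g x) ∧
        (∀ x, g x = (Ω * (Matrix.of fun i j : ZMod p => a i j x) * Ωᴴ) k k) ∧
        (∀ i j : ZMod p, ∀ x : M, (Pc k * a * Pc k) i j x = g x * P k i j)) ∧
      (∀ b, DPred p θ b →
        (Pc k * a * Pc k) * (Pc k * b * Pc k) = (Pc k * b * Pc k) * (Pc k * a * Pc k)) :=
  stmt_10_general p θ ω hω Ω hΩ P hP Pc hPc
end

section
/- Assume X \ K is dense in X. If b ∈ A(X,K) commutes with every element of A(X,K), then there exists h ∈ C(X,ℂ) such that b = h·1_p, i.e., b is the scalar matrix with diagonal entries all equal to h. -/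
/-!
The matrices `single i j f` with `f` vanishing on `K` lie in `A(X,K)`, and commuting with them
forces `f * b j k = 0` for `j ≠ k` and `b i i * f = b j j * f`. Since `X` is completely regular,
such an `f` can be made nonzero at any point off `K`; so these differences vanish on the dense
set `Kᶜ`, hence everywhere.
-/

open Matrix

/-- `APred p K a` says that the matrix `a ∈ M_p(C(X,ℂ))` lies in `A(X,K)`, i.e. its
off-diagonal entries vanish at every point of `K`. -/
def APred {X : Type*} [TopologicalSpace X] (p : ℕ) (K : Set X)
    (a : Matrix (Fin p) (Fin p) C(X, ℂ)) : Prop :=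
  ∀ i j : Fin p, i ≠ j → ∀ x ∈ K, a i j x = 0

namespace Matrix

variable {n α : Type*} [Fintype n] [DecidableEq n] [CommRing α]

theorem mem_range_scalar_of_commute_single_mem {S : Set α}
    (hS : ∀ g : α, (∀ f ∈ S, g * f = 0) → g = 0) {M : Matrix n n α}
    (hM : ∀ i j, ∀ f ∈ S, Commute (single i j f) M) :
    M ∈ Set.range (scalar n) := by
  cases isEmpty_or_nonempty n
  · exact ⟨0, Subsingleton.elim _ _⟩
  obtain ⟨i₀⟩ := ‹Nonempty n›
  have off_diag {j k : n} (hkj : k ≠ j) : M j k = 0 :=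
    hS _ fun f hf => by
      simpa [mul_comm, hkj] using ext_iff.mpr (hM j j f hf) j k
  have diag (i j : n) : M i i = M j j :=
    sub_eq_zero.mp <| hS _ fun f hf => by
      have := ext_iff.mpr (hM i j f hf) i j
      simp only [single_mul_apply_same, mul_single_apply_same] at this
      rw [sub_mul, ← this, mul_comm f, sub_self]
  refine ⟨M i₀ i₀, Matrix.ext fun j k => ?_⟩
  obtain rfl | hjk := eq_or_ne j k
  · rw [scalar_apply, diagonal_apply_eq, diag]
  · rw [scalar_apply, diagonal_apply_ne _ hjk, off_diag hjk.symm]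

end Matrix

namespace ContinuousMap

variable {X 𝕜 : Type*} [TopologicalSpace X] [CompletelyRegularSpace X] [RCLike 𝕜]

theorem exists_eqOn_zero_apply_eq_one {K : Set X} (hK : IsClosed K) {x : X} (hx : x ∉ K) :
    ∃ f : C(X, 𝕜), Set.EqOn f 0 K ∧ f x = 1 := by
  obtain ⟨f, hf, hfx, hfK⟩ := CompletelyRegularSpace.completely_regular x K hK hx
  refine ⟨⟨fun y => ((1 - f y : ℝ) : 𝕜), by fun_prop⟩, fun y hy => ?_, by simp [hfx]⟩
  simp [show (f y : ℝ) = 1 from congrArg Subtype.val (hfK hy)]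

theorem eq_zero_of_forall_eqOn_zero_mul_eq_zero {K : Set X} (hK : IsClosed K) (hdense : Dense Kᶜ)
    {g : C(X, 𝕜)} (hg : ∀ f : C(X, 𝕜), Set.EqOn f 0 K → g * f = 0) : g = 0 := by
  have hgK : Set.EqOn g 0 Kᶜ := fun x hx => by
    obtain ⟨f, hfK, hfx⟩ := exists_eqOn_zero_apply_eq_one (𝕜 := 𝕜) hK hx
    simpa [hfx] using congr($(hg f hfK) x)
  exact coe_injective (Continuous.ext_on hdense g.continuous continuous_const hgK)

end ContinuousMap

theorem aPred_single {X : Type*} [TopologicalSpace X] {p : ℕ} {K : Set X} (i j : Fin p)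
    {f : C(X, ℂ)} (hf : Set.EqOn f 0 K) : APred p K (single i j f) := by
  intro k l _ x hx
  rw [single_apply]
  split_ifs
  · exact hf hx
  · rfl

theorem stmt_12_general {X : Type*} [TopologicalSpace X] [CompactSpace X] [T2Space X]
    (p : ℕ) (K : Set X) (hK : IsClosed K) (hdense : Dense Kᶜ)
    (b : Matrix (Fin p) (Fin p) C(X, ℂ))
    (hcomm : ∀ c : Matrix (Fin p) (Fin p) C(X, ℂ), APred p K c → b * c = c * b) :
    ∃ h : C(X, ℂ), b = Matrix.diagonal (fun _ => h) := by
  obtain ⟨h, rfl⟩ := mem_range_scalar_of_commute_single_mem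
    (fun g => ContinuousMap.eq_zero_of_forall_eqOn_zero_mul_eq_zero hK hdense)
    fun i j f hf => (hcomm _ (aPred_single i j hf)).symm
  exact ⟨h, scalar_apply h⟩

/-- if `X \ K` is dense in `X` and `b ∈ A(X,K)` commutes with every
element of `A(X,K)`, then `b = h·1_p` for some `h ∈ C(X,ℂ)`. -/
theorem stmt_12 {X : Type*} [TopologicalSpace X] [CompactSpace X] [T2Space X]
    (p : ℕ) (hp : 2 ≤ p) (K : Set X) (hK : IsClosed K) (hdense : Dense Kᶜ)
    (b : Matrix (Fin p) (Fin p) C(X, ℂ)) (hb : APred p K b)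
    (hcomm : ∀ c : Matrix (Fin p) (Fin p) C(X, ℂ), APred p K c → b * c = c * b) :
    ∃ h : C(X, ℂ), b = Matrix.diagonal (fun _ => h) :=
  stmt_12_general p K hK hdense b hcomm
end

section
/- Let φ : A(X,K) → ℂ be a continuous unital algebra homomorphism. Then there exist an index i ∈ {1,…,p} and a point x₀ ∈ K such that φ(a) = a_{i,i}(x₀) for every a ∈ A(X,K). -/
/-!
The diagonal matrix units `Eⱼⱼ` lie in `A(X,K)` and form a complete family of orthogonal
idempotents, so a character `χ` of `A(X,K)` sends exactly one of them, `Eᵢᵢ`, to `1`. Then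
`χ a = χ (Eᵢᵢ a Eᵢᵢ) = χ (single i i (aᵢᵢ))`, and `c ↦ χ (single i i c)` is a character of
`C(X,ℂ)`, i.e. evaluation at some `x₀` by Gelfand duality. If `x₀ ∉ K`, a Urysohn function `g`
vanishing on `K` with `g x₀ = 1` gives `single i j g * single j i g = single i i (g²)` with both
factors in `A(X,K)`, which `χ` would send to `0` and to `1` at once.
-/

open Matrix

theorem CompleteOrthogonalIdempotents.exists_eq_one {R I : Type*} [Semiring R]
    [IsLeftCancelMulZero R] [Nontrivial R] [Fintype I] {e : I → R}
    (he : CompleteOrthogonalIdempotents e) : ∃ i, e i = 1 := by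
  by_contra! h
  have hzero (i : I) : e i = 0 :=
    (IsIdempotentElem.iff_eq_zero_or_one.mp (he.idem i)).resolve_right (h i)
  simpa [hzero] using he.complete

namespace Matrix

theorem completeOrthogonalIdempotents_single_one {n α : Type*} [Fintype n] [DecidableEq n]
    [Semiring α] :
    CompleteOrthogonalIdempotents fun i : n => single i i (1 : α) where
  idem i := by simp [IsIdempotentElem]
  ortho i j hij := by simp [hij]
  complete := sum_single_one

section Corner

variable {R B F n : Type*} [CommSemiring R] [Semiring B] [Algebra R B] [Semiring F] [Algebra R F]
  [Fintype n] [DecidableEq n] {S : Subalgebra R (Matrix n n B)} (hS : ∀ i c, single i i c ∈ S)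

theorem exists_algHom_single_one_eq_one [IsLeftCancelMulZero F] [Nontrivial F]
    (χ : S →ₐ[R] F) : ∃ i, χ ⟨single i i 1, hS i 1⟩ = 1 :=
  have hS' : CompleteOrthogonalIdempotents fun i => (⟨single i i 1, hS i 1⟩ : S) :=
    (CompleteOrthogonalIdempotents.map_injective_iff S.val.toRingHom
      Subtype.val_injective).mp (completeOrthogonalIdempotents_single_one (α := B))
  (hS'.map χ.toRingHom).exists_eq_one

def cornerAlgHom (χ : S →ₐ[R] F) (i : n) (hχ : χ ⟨single i i 1, hS i 1⟩ = 1) : B →ₐ[R] F where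
  toFun c := χ ⟨single i i c, hS i c⟩
  map_one' := hχ
  map_mul' c d := by
    rw [← map_mul]; congr 1; exact Subtype.ext (single_mul_single_same ..).symm
  map_zero' := by rw [← map_zero χ]; congr 1; exact Subtype.ext (single_zero i i)
  map_add' c d := by
    rw [← map_add]; congr 1; exact Subtype.ext (single_add i i c d)
  commutes' r := by
    have : (⟨single i i (algebraMap R B r), hS i _⟩ : S) = r • ⟨single i i 1, hS i 1⟩ :=
      Subtype.ext (by simp [Algebra.algebraMap_eq_smul_one, smul_single])
    rw [this, map_smul, hχ, Algebra.algebraMap_eq_smul_one]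

@[simp]
theorem cornerAlgHom_apply (χ : S →ₐ[R] F) (i : n) (hχ : χ ⟨single i i 1, hS i 1⟩ = 1) (c : B) :
    cornerAlgHom hS χ i hχ c = χ ⟨single i i c, hS i c⟩ :=
  rfl

theorem algHom_apply_eq_cornerAlgHom (χ : S →ₐ[R] F) (i : n)
    (hχ : χ ⟨single i i 1, hS i 1⟩ = 1) (a : S) :
    χ a = cornerAlgHom hS χ i hχ ((a : Matrix n n B) i i) := by
  have hcorner : ⟨single i i 1, hS i 1⟩ * a * ⟨single i i 1, hS i 1⟩ =
      (⟨single i i ((a : Matrix n n B) i i), hS i _⟩ : S) :=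
    Subtype.ext (by simp)
  rw [cornerAlgHom_apply, ← hcorner, map_mul, map_mul, hχ, one_mul, mul_one]

end Corner

end Matrix

theorem ContinuousMap.exists_algHom_eq_eval {X 𝕜 : Type*} [TopologicalSpace X] [CompactSpace X]
    [T2Space X] [RCLike 𝕜] (ψ : C(X, 𝕜) →ₐ[𝕜] 𝕜) : ∃ x₀, ∀ f : C(X, 𝕜), ψ f = f x₀ := by
  obtain ⟨x₀, hx₀⟩ := (WeakDual.CharacterSpace.homeoEval X 𝕜).surjective
    (WeakDual.CharacterSpace.equivAlgHom.symm ψ)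
  exact ⟨x₀, fun f => (DFunLike.congr_fun hx₀ f).symm⟩

namespace APred

variable {X : Type*} [TopologicalSpace X] {p : ℕ} {K : Set X}

protected theorem single {i j : Fin p} {c : C(X, ℂ)} (hc : i ≠ j → ∀ x ∈ K, c x = 0) :
    APred p K (single i j c) := by
  intro i' j' hne x hx
  by_cases hij : i = i' ∧ j = j'
  · obtain ⟨rfl, rfl⟩ := hij
    simpa using hc hne x hx
  · simp [single, hij]

theorem single_diag (i : Fin p) (c : C(X, ℂ)) : APred p K (single i i c) :=
  APred.single fun h => absurd rfl h

theorem add {a b : Matrix (Fin p) (Fin p) C(X, ℂ)} (ha : APred p K a) (hb : APred p K b) :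
    APred p K (a + b) := by
  intro i j hne x hx
  simp [ha i j hne x hx, hb i j hne x hx]

theorem mul {a b : Matrix (Fin p) (Fin p) C(X, ℂ)} (ha : APred p K a) (hb : APred p K b) :
    APred p K (a * b) := by
  intro i j hne x hx
  simp only [mul_apply, ContinuousMap.coe_sum, Finset.sum_apply, ContinuousMap.mul_apply]
  refine Finset.sum_eq_zero fun l _ => ?_
  by_cases hl : l = i
  · rw [hl, hb i j hne x hx, mul_zero]
  · rw [ha i l (Ne.symm hl) x hx, zero_mul]

protected theorem algebraMap (r : ℂ) :
    APred p K (algebraMap ℂ (Matrix (Fin p) (Fin p) C(X, ℂ)) r) := by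
  intro i j hne x _
  simp [algebraMap_eq_diagonal, diagonal_apply_ne _ hne]

variable (p K) in
def subalgebra : Subalgebra ℂ (Matrix (Fin p) (Fin p) C(X, ℂ)) where
  carrier := {a | APred p K a}
  mul_mem' := mul
  add_mem' := add
  algebraMap_mem' := APred.algebraMap

theorem exists_mul_apply_ne [NormalSpace X] [T1Space X] (hp : 2 ≤ p) (hK : IsClosed K) {x₀ : X}
    (hx₀ : x₀ ∉ K) (i : Fin p) :
    ∃ a b, APred p K a ∧ APred p K b ∧ (a * b) i i x₀ ≠ a i i x₀ * b i i x₀ := by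
  have : Nontrivial (Fin p) := Fin.nontrivial_iff_two_le.mpr hp
  obtain ⟨j, hj⟩ := exists_ne i
  obtain ⟨f, hfK, hfx₀, -⟩ := exists_continuous_zero_one_of_isClosed hK isClosed_singleton
    (Set.disjoint_singleton_right.mpr hx₀)
  let g : C(X, ℂ) := (ContinuousMap.mk Complex.ofReal Complex.continuous_ofReal).comp f
  have hgK : ∀ x ∈ K, g x = 0 := fun x hx => by simp [g, hfK hx]
  refine ⟨single i j g, single j i g, APred.single fun _ => hgK, APred.single fun _ => hgK, ?_⟩
  simp [g, hfx₀ rfl, hj]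

theorem exists_eq_apply_of_algHom [CompactSpace X] [T2Space X] (hp : 2 ≤ p) (hK : IsClosed K)
    (χ : subalgebra p K →ₐ[ℂ] ℂ) :
    ∃ i, ∃ x₀ ∈ K, ∀ a : subalgebra p K, χ a = (a : Matrix (Fin p) (Fin p) C(X, ℂ)) i i x₀ := by
  have hS (i : Fin p) (c : C(X, ℂ)) : single i i c ∈ subalgebra p K := single_diag i c
  obtain ⟨i, hi⟩ := exists_algHom_single_one_eq_one hS χ
  obtain ⟨x₀, hx₀⟩ := ContinuousMap.exists_algHom_eq_eval (cornerAlgHom hS χ i hi)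
  have hχ (a : subalgebra p K) : χ a = (a : Matrix (Fin p) (Fin p) C(X, ℂ)) i i x₀ := by
    rw [algHom_apply_eq_cornerAlgHom hS χ i hi, hx₀]
  refine ⟨i, x₀, ?_, hχ⟩
  by_contra hx₀K
  obtain ⟨a, b, ha, hb, hne⟩ := exists_mul_apply_ne hp hK hx₀K i
  have hmul := map_mul χ ⟨a, ha⟩ ⟨b, hb⟩
  rw [hχ, hχ, hχ] at hmul
  exact hne hmul

def restrictAlgHom (φ : Matrix (Fin p) (Fin p) C(X, ℂ) → ℂ)
    (hadd : ∀ a b, APred p K a → APred p K b → φ (a + b) = φ a + φ b)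
    (hmul : ∀ a b, APred p K a → APred p K b → φ (a * b) = φ a * φ b)
    (hsmul : ∀ (c : ℂ) a, APred p K a → φ (c • a) = c * φ a)
    (hone : φ 1 = 1) : subalgebra p K →ₐ[ℂ] ℂ where
  toFun a := φ a
  map_one' := hone
  map_mul' a b := hmul a b a.2 b.2
  map_zero' := by
    have hzero := (subalgebra p K).zero_mem
    simpa using hadd 0 0 hzero hzero
  map_add' a b := hadd a b a.2 b.2
  commutes' r := by
    simpa [Algebra.algebraMap_eq_smul_one, hone] using hsmul r 1 (subalgebra p K).one_mem

end APred

theorem stmt_13_general {X : Type*} [TopologicalSpace X] [CompactSpace X] [T2Space X]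
    (p : ℕ) (hp : 2 ≤ p) (K : Set X) (hK : IsClosed K)
    (φ : Matrix (Fin p) (Fin p) C(X, ℂ) → ℂ)
    (hadd : ∀ a b, APred p K a → APred p K b → φ (a + b) = φ a + φ b)
    (hmul : ∀ a b, APred p K a → APred p K b → φ (a * b) = φ a * φ b)
    (hsmul : ∀ (c : ℂ) a, APred p K a → φ (c • a) = c * φ a)
    (hone : φ 1 = 1) :
    ∃ (i : Fin p) (x₀ : X), x₀ ∈ K ∧ ∀ a, APred p K a → φ a = a i i x₀ := by
  obtain ⟨i, x₀, hx₀, hφ⟩ :=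
    APred.exists_eq_apply_of_algHom hp hK (APred.restrictAlgHom φ hadd hmul hsmul hone)
  exact ⟨i, x₀, hx₀, fun a ha => hφ ⟨a, ha⟩⟩

/-- every continuous unital algebra homomorphism `φ : A(X,K) → ℂ`
is of the form `a ↦ a_{i,i}(x₀)` for some index `i` and some point `x₀ ∈ K`. -/
theorem stmt_13 {X : Type*} [TopologicalSpace X] [CompactSpace X] [T2Space X]
    (p : ℕ) (hp : 2 ≤ p) (K : Set X) (hK : IsClosed K)
    (φ : Matrix (Fin p) (Fin p) C(X, ℂ) → ℂ)
    (hcont : ContinuousOn φ {a | APred p K a})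
    (hadd : ∀ a b, APred p K a → APred p K b → φ (a + b) = φ a + φ b)
    (hmul : ∀ a b, APred p K a → APred p K b → φ (a * b) = φ a * φ b)
    (hsmul : ∀ (c : ℂ) a, APred p K a → φ (c • a) = c * φ a)
    (hone : φ 1 = 1) :
    ∃ (i : Fin p) (x₀ : X), x₀ ∈ K ∧ ∀ a, APred p K a → φ a = a i i x₀ :=
  stmt_13_general p hp K hK φ hadd hmul hsmul hone
end

section
/- Let T = {z ∈ ℂ : |z| = 1} and let c : T → T be complex conjugation, c(z) = z̄. Let D be the set of all 2×2 matrices over C(T,ℂ) of the form [[f₀, f₁],[f₁∘c, f₀∘c]] with f₀, f₁ ∈ C(T,ℂ). Then D is a unital star-subalgebra of M₂(C(T,ℂ)) and D is star-isomorphic to the algebra B = {f ∈ C([0,1], M₂(ℂ)) : f(0) and f(1) are diagonal matrices}. -/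
/-!
With `J = !![0, 1; 1, 0]`, the matrices `!![f₀, f₁; f₁ ∘ c, f₀ ∘ c]` are exactly the fixed points
of the star-algebra automorphism `a ↦ J (a ∘ c) J` of `M₂(C(T))`, so they form a star subalgebra.

The isomorphism restricts `a` to the upper half circle `t ↦ exp (π i t)` and conjugates by the
Hadamard unitary `H = (1/√2) !![1, 1; 1, -1]`. The upper arc together with its conjugate covers
the circle, so `a` is determined by this restriction, and conversely any continuous
`g : [0, 1] → M₂(ℂ)` is the restriction of such an `a` provided `g 0` and `g 1`, where the two
arcs meet, have the shape `!![p, q; q, p]`. The Hadamard conjugation turns exactly these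
matrices into the diagonal ones.
-/

open Matrix Real ComplexConjugate
open scoped unitInterval

noncomputable section

namespace StarAlgHom

variable {R A B n : Type*} [Fintype n] [DecidableEq n] [CommSemiring R]
  [Semiring A] [Algebra R A] [Star A] [Semiring B] [Algebra R B] [Star B]

def mapMatrix (f : A →⋆ₐ[R] B) : Matrix n n A →⋆ₐ[R] Matrix n n B where
  __ := f.toAlgHom.mapMatrix
  map_star' _ := conjTranspose_map f (map_star f)

@[simp]
theorem mapMatrix_apply (f : A →⋆ₐ[R] B) (a : Matrix n n A) : f.mapMatrix a = a.map f := rfl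

end StarAlgHom

namespace ContinuousMap

variable {X R n : Type*} [TopologicalSpace X] [Fintype n] [DecidableEq n] [CommSemiring R]
  [TopologicalSpace R] [IsTopologicalSemiring R] [StarRing R] [ContinuousStar R]

def matrixStarAlgHom : Matrix n n C(X, R) →⋆ₐ[R] C(X, Matrix n n R) where
  toFun a := ⟨fun x => a.map (· x), continuous_matrix fun i j => (a i j).continuous⟩
  map_one' := by ext x : 1; exact map_one (evalStarAlgHom R R x).mapMatrix
  map_mul' a b := by ext x : 1; exact map_mul (evalStarAlgHom R R x).mapMatrix a b
  map_zero' := by ext x : 1; exact map_zero (evalStarAlgHom R R x).mapMatrix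
  map_add' a b := by ext x : 1; exact map_add (evalStarAlgHom R R x).mapMatrix a b
  commutes' r := by ext x : 1; exact AlgHomClass.commutes (evalStarAlgHom R R x).mapMatrix r
  map_star' a := by ext x : 1; exact map_star (evalStarAlgHom R R x).mapMatrix a

end ContinuousMap

namespace Matrix

theorem isDiag_fin_two_iff {α : Type*} [Zero α] {A : Matrix (Fin 2) (Fin 2) α} :
    A.IsDiag ↔ A 0 1 = 0 ∧ A 1 0 = 0 := by
  refine ⟨fun h => ⟨h (by decide), h (by decide)⟩, fun ⟨h₀₁, h₁₀⟩ i j hij => ?_⟩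
  fin_cases i <;> fin_cases j <;> simp_all

variable (A : Type*) [Semiring A] [StarRing A]

theorem star_swap : star !![(0 : A), 1; 1, 0] = !![0, 1; 1, 0] := by
  ext i j; fin_cases i <;> fin_cases j <;> simp

def swapUnitary : unitary (Matrix (Fin 2) (Fin 2) A) :=
  ⟨!![0, 1; 1, 0], by simp [Unitary.mem_iff, star_swap, one_fin_two]⟩

end Matrix

section CrossedProduct

variable {X R : Type*} [TopologicalSpace X] [CommSemiring R]
  [TopologicalSpace R] [IsTopologicalSemiring R] [StarRing R] [ContinuousStar R]

variable (R) in
def twistedFlip (c : C(X, X)) :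
    Matrix (Fin 2) (Fin 2) C(X, R) →⋆ₐ[R] Matrix (Fin 2) (Fin 2) C(X, R) :=
  (Unitary.conjStarAlgAut R _ (swapUnitary C(X, R))).toStarAlgHom.comp
    (ContinuousMap.compStarAlgHom' R R c).mapMatrix

theorem twistedFlip_apply (c : C(X, X)) (a : Matrix (Fin 2) (Fin 2) C(X, R)) :
    twistedFlip R c a =
      !![(a 1 1).comp c, (a 1 0).comp c; (a 0 1).comp c, (a 0 0).comp c] := by
  ext i j : 1
  fin_cases i <;> fin_cases j <;>
    simp [twistedFlip, swapUnitary, star_swap, mul_apply, vecMul, dotProduct, Fin.sum_univ_two]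

variable (R) in
def crossedSubalgebra (c : C(X, X)) : StarSubalgebra R (Matrix (Fin 2) (Fin 2) C(X, R)) :=
  StarAlgHom.equalizer (twistedFlip R c) (StarAlgHom.id R _)

theorem mem_crossedSubalgebra_iff {c : C(X, X)} (hc : ∀ x, c (c x) = x)
    {a : Matrix (Fin 2) (Fin 2) C(X, R)} :
    a ∈ crossedSubalgebra R c ↔ ∃ f₀ f₁ : C(X, R), a = !![f₀, f₁; f₁.comp c, f₀.comp c] := by
  have hcc : c.comp c = .id X := ContinuousMap.ext hc
  rw [crossedSubalgebra, StarAlgHom.mem_equalizer, twistedFlip_apply, StarAlgHom.coe_id, id]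
  constructor
  · intro h
    have h₁₁ : a 1 1 = (a 0 0).comp c := by
      rw [← congr_fun₂ h 0 0]; simp [ContinuousMap.comp_assoc, hcc]
    have h₁₀ : a 1 0 = (a 0 1).comp c := by
      rw [← congr_fun₂ h 0 1]; simp [ContinuousMap.comp_assoc, hcc]
    exact ⟨a 0 0, a 0 1, by conv_lhs => rw [eta_fin_two a, h₁₁, h₁₀]⟩
  · rintro ⟨f₀, f₁, rfl⟩
    simp [ContinuousMap.comp_assoc, hcc]

end CrossedProduct

def hadamardMatrix : Matrix (Fin 2) (Fin 2) ℂ := !![1, 1; 1, -1]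

theorem hadamardMatrix_mul_self : hadamardMatrix * hadamardMatrix = (2 : ℂ) • 1 := by
  ext i j
  fin_cases i <;> fin_cases j <;> norm_num [hadamardMatrix, mul_apply, Fin.sum_univ_two]

theorem star_hadamardMatrix : star hadamardMatrix = hadamardMatrix := by
  ext i j; fin_cases i <;> fin_cases j <;> simp [hadamardMatrix]

theorem star_inv_sqrt_two_smul_hadamardMatrix :
    star (((√2 : ℝ) : ℂ)⁻¹ • hadamardMatrix) = ((√2 : ℝ) : ℂ)⁻¹ • hadamardMatrix := by
  rw [star_smul, star_hadamardMatrix, star_inv₀, Complex.star_def, Complex.conj_ofReal]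

theorem inv_sqrt_two_mul_self : ((√2 : ℝ) : ℂ)⁻¹ * ((√2 : ℝ) : ℂ)⁻¹ = 2⁻¹ := by
  rw [← mul_inv, ← Complex.ofReal_mul, mul_self_sqrt zero_le_two, Complex.ofReal_ofNat]

def hadamardUnitary : unitary (Matrix (Fin 2) (Fin 2) ℂ) :=
  ⟨((√2 : ℝ) : ℂ)⁻¹ • hadamardMatrix, by
    rw [Unitary.mem_iff, star_inv_sqrt_two_smul_hadamardMatrix, smul_mul_smul,
      inv_sqrt_two_mul_self, hadamardMatrix_mul_self, smul_smul, inv_mul_cancel₀ two_ne_zero,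
      one_smul]
    exact ⟨rfl, rfl⟩⟩

def hadamardConj : Matrix (Fin 2) (Fin 2) ℂ ≃⋆ₐ[ℂ] Matrix (Fin 2) (Fin 2) ℂ :=
  Unitary.conjStarAlgAut ℂ _ hadamardUnitary

theorem hadamardConj_symm : hadamardConj.symm = hadamardConj := by
  rw [hadamardConj, Unitary.conjStarAlgAut_symm]
  congr 1
  exact Subtype.ext star_inv_sqrt_two_smul_hadamardMatrix

theorem hadamardConj_hadamardConj (X : Matrix (Fin 2) (Fin 2) ℂ) :
    hadamardConj (hadamardConj X) = X := by
  have h := hadamardConj.symm_apply_apply X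
  rwa [hadamardConj_symm] at h

theorem continuous_hadamardConj : Continuous hadamardConj :=
  (continuous_const.mul continuous_id).mul continuous_const

theorem hadamardConj_apply (X : Matrix (Fin 2) (Fin 2) ℂ) :
    hadamardConj X = (2⁻¹ : ℂ) • (hadamardMatrix * X * hadamardMatrix) := by
  rw [hadamardConj, Unitary.conjStarAlgAut_apply, hadamardUnitary,
    star_inv_sqrt_two_smul_hadamardMatrix]
  simp only [Matrix.smul_mul, Matrix.mul_smul, smul_smul, inv_sqrt_two_mul_self]

theorem isDiag_hadamardConj_iff {X : Matrix (Fin 2) (Fin 2) ℂ} :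
    (hadamardConj X).IsDiag ↔ X 0 0 = X 1 1 ∧ X 0 1 = X 1 0 := by
  have h₀₁ : hadamardConj X 0 1 = 2⁻¹ * ((X 0 0 - X 1 1) - (X 0 1 - X 1 0)) := by
    rw [hadamardConj_apply, eta_fin_two X]; simp [hadamardMatrix]; ring
  have h₁₀ : hadamardConj X 1 0 = 2⁻¹ * ((X 0 0 - X 1 1) + (X 0 1 - X 1 0)) := by
    rw [hadamardConj_apply, eta_fin_two X]; simp [hadamardMatrix]; ring
  rw [isDiag_fin_two_iff, h₀₁, h₁₀]
  constructor
  · rintro ⟨h, h'⟩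
    exact ⟨by linear_combination h + h', by linear_combination h' - h⟩
  · rintro ⟨h, h'⟩
    exact ⟨by linear_combination 2⁻¹ * h - 2⁻¹ * h', by linear_combination 2⁻¹ * h + 2⁻¹ * h'⟩

local notation "𝕋" => {z : ℂ // ‖z‖ = 1}

namespace UnitCircle

theorem re_sq_add_im_sq (z : 𝕋) : (z : ℂ).re ^ 2 + (z : ℂ).im ^ 2 = 1 := by
  simpa [Complex.normSq_apply, z.2, sq] using (Complex.sq_norm (z : ℂ)).symm

def conjCircle : C(𝕋, 𝕋) :=
  ⟨fun z => ⟨conj (z : ℂ), by rw [Complex.norm_conj, z.2]⟩, by fun_prop⟩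

@[simp]
theorem coe_conjCircle (z : 𝕋) : (conjCircle z : ℂ) = conj (z : ℂ) := rfl

theorem conjCircle_conjCircle (z : 𝕋) : conjCircle (conjCircle z) = z := by
  ext1; simp

theorem conjCircle_eq_self_iff {z : 𝕋} : conjCircle z = z ↔ (z : ℂ).im = 0 := by
  rw [← Complex.conj_eq_iff_im, ← coe_conjCircle, Subtype.ext_iff]

def upperArc : C(I, 𝕋) :=
  ⟨fun t => ⟨Complex.exp ((π * t : ℝ) * Complex.I), Complex.norm_exp_ofReal_mul_I _⟩, by
    fun_prop⟩

theorem coe_upperArc (t : I) : (upperArc t : ℂ) = Complex.exp ((π * t : ℝ) * Complex.I) := rfl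

theorem im_upperArc (t : I) : (upperArc t : ℂ).im = Real.sin (π * t) :=
  Complex.exp_ofReal_mul_I_im _

theorem im_upperArc_nonneg (t : I) : 0 ≤ (upperArc t : ℂ).im := by
  rw [im_upperArc]
  exact sin_nonneg_of_nonneg_of_le_pi (mul_nonneg pi_pos.le (unitInterval.nonneg t))
    (mul_le_of_le_one_right pi_pos.le (unitInterval.le_one t))

theorem im_upperArc_eq_zero_iff {t : I} : (upperArc t : ℂ).im = 0 ↔ t = 0 ∨ t = 1 := by
  rw [im_upperArc]
  constructor
  · intro h
    by_contra! ht
    have ht₀ : 0 < (t : ℝ) := unitInterval.coe_pos.2 (unitInterval.nonneg'.lt_of_ne' ht.1)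
    have ht₁ : (t : ℝ) < 1 := unitInterval.coe_lt_one.2 (unitInterval.le_one'.lt_of_ne ht.2)
    exact (sin_pos_of_pos_of_lt_pi (by positivity) (by nlinarith [pi_pos])).ne' h
  · rintro (rfl | rfl) <;> simp

def arcParam : C(𝕋, I) :=
  ⟨fun z => ⟨arccos (z : ℂ).re / π, div_nonneg (arccos_nonneg _) pi_pos.le,
    (div_le_one pi_pos).2 (arccos_le_pi _)⟩, by fun_prop⟩

@[simp]
theorem coe_arcParam (z : 𝕋) : (arcParam z : ℝ) = arccos (z : ℂ).re / π := rfl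

theorem arcParam_upperArc (t : I) : arcParam (upperArc t) = t := by
  ext
  rw [coe_arcParam, coe_upperArc, Complex.exp_ofReal_mul_I_re,
    arccos_cos (mul_nonneg pi_pos.le (unitInterval.nonneg t))
      (mul_le_of_le_one_right pi_pos.le (unitInterval.le_one t))]
  field_simp

theorem arcParam_conjCircle (z : 𝕋) : arcParam (conjCircle z) = arcParam z := by
  ext; simp

theorem coe_upperArc_arcParam (z : 𝕋) :
    (upperArc (arcParam z) : ℂ) = ⟨(z : ℂ).re, |(z : ℂ).im|⟩ := by
  have hre : -1 ≤ (z : ℂ).re ∧ (z : ℂ).re ≤ 1 := by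
    rw [← abs_le, ← sq_le_one_iff_abs_le_one]; nlinarith [re_sq_add_im_sq z]
  have hangle : π * (arcParam z : ℝ) = arccos (z : ℂ).re := by
    rw [coe_arcParam]; field_simp
  apply Complex.ext
  · rw [coe_upperArc, Complex.exp_ofReal_mul_I_re, hangle, cos_arccos hre.1 hre.2]
  · rw [im_upperArc, hangle, sin_arccos, ← sqrt_sq_eq_abs]
    congr 1
    linarith [re_sq_add_im_sq z]

theorem upperArc_arcParam_of_nonneg {z : 𝕋} (hz : 0 ≤ (z : ℂ).im) :
    upperArc (arcParam z) = z := by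
  ext1; rw [coe_upperArc_arcParam, abs_of_nonneg hz]

theorem conjCircle_upperArc_arcParam_of_nonpos {z : 𝕋} (hz : (z : ℂ).im ≤ 0) :
    conjCircle (upperArc (arcParam z)) = z := by
  ext1; apply Complex.ext <;> simp [coe_upperArc_arcParam, abs_of_nonpos hz]

theorem arcParam_eq_zero_or_one {z : 𝕋} (hz : (z : ℂ).im = 0) :
    arcParam z = 0 ∨ arcParam z = 1 := by
  rw [← im_upperArc_eq_zero_iff, upperArc_arcParam_of_nonneg hz.ge, hz]

variable {Y : Type*} [TopologicalSpace Y]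

theorem continuousMap_ext_of_upperArc {f g : C(𝕋, Y)} (h : ∀ t, f (upperArc t) = g (upperArc t))
    (h' : ∀ t, f (conjCircle (upperArc t)) = g (conjCircle (upperArc t))) : f = g := by
  ext z
  rcases le_total 0 (z : ℂ).im with hz | hz
  · rw [← upperArc_arcParam_of_nonneg hz, h]
  · rw [← conjCircle_upperArc_arcParam_of_nonpos hz, h']

theorem exists_upperArc_conjCircle_eq (u v : C(I, Y)) (h₀ : u 0 = v 0) (h₁ : u 1 = v 1) :
    ∃ f : C(𝕋, Y), ∀ t, f (upperArc t) = u t ∧ f (conjCircle (upperArc t)) = v t := by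
  classical
  have hglue : ∀ z : 𝕋, 0 = (z : ℂ).im → u (arcParam z) = v (arcParam z) := fun z hz => by
    rcases arcParam_eq_zero_or_one hz.symm with h | h <;> rw [h] <;> assumption
  refine ⟨⟨fun z => if 0 ≤ (z : ℂ).im then u (arcParam z) else v (arcParam z),
    Continuous.if_le (by fun_prop) (by fun_prop) continuous_const (by fun_prop) hglue⟩,
    fun t => ⟨?_, ?_⟩⟩
  · simp [im_upperArc_nonneg, arcParam_upperArc]
  · simp only [ContinuousMap.coe_mk, arcParam_conjCircle, arcParam_upperArc, coe_conjCircle,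
      Complex.conj_im, neg_nonneg]
    split_ifs with ht
    · rcases im_upperArc_eq_zero_iff.1 (le_antisymm ht (im_upperArc_nonneg t)) with rfl | rfl
      exacts [h₀, h₁]
    · rfl

def upperArcHadamard :
    Matrix (Fin 2) (Fin 2) C(𝕋, ℂ) →⋆ₐ[ℂ] C(I, Matrix (Fin 2) (Fin 2) ℂ) :=
  (ContinuousMap.compStarAlgHom I hadamardConj.toStarAlgHom continuous_hadamardConj).comp
    ((ContinuousMap.compStarAlgHom' ℂ _ upperArc).comp ContinuousMap.matrixStarAlgHom)

theorem upperArcHadamard_apply (f₀ f₁ : C(𝕋, ℂ)) (t : I) :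
    upperArcHadamard !![f₀, f₁; f₁.comp conjCircle, f₀.comp conjCircle] t =
      hadamardConj !![f₀ (upperArc t), f₁ (upperArc t);
        f₁ (conjCircle (upperArc t)), f₀ (conjCircle (upperArc t))] := by
  refine congrArg hadamardConj (ext fun i j => ?_)
  fin_cases i <;> fin_cases j <;> rfl

theorem mapsTo_upperArcHadamard :
    Set.MapsTo upperArcHadamard (crossedSubalgebra ℂ conjCircle)
      {f | (f 0).IsDiag ∧ (f 1).IsDiag} := by
  intro a ha
  obtain ⟨f₀, f₁, rfl⟩ := (mem_crossedSubalgebra_iff conjCircle_conjCircle).1 ha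
  have hdiag : ∀ t : I, t = 0 ∨ t = 1 →
      (upperArcHadamard !![f₀, f₁; f₁.comp conjCircle, f₀.comp conjCircle] t).IsDiag := by
    intro t ht
    have hfix : conjCircle (upperArc t) = upperArc t :=
      conjCircle_eq_self_iff.2 (im_upperArc_eq_zero_iff.2 ht)
    rw [upperArcHadamard_apply, isDiag_hadamardConj_iff, hfix]
    exact ⟨rfl, rfl⟩
  exact ⟨hdiag 0 (.inl rfl), hdiag 1 (.inr rfl)⟩

theorem injOn_upperArcHadamard :
    Set.InjOn upperArcHadamard (crossedSubalgebra ℂ conjCircle) := by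
  intro a ha b hb hab
  obtain ⟨f₀, f₁, rfl⟩ := (mem_crossedSubalgebra_iff conjCircle_conjCircle).1 ha
  obtain ⟨g₀, g₁, rfl⟩ := (mem_crossedSubalgebra_iff conjCircle_conjCircle).1 hb
  have heq : ∀ t : I,
      !![f₀ (upperArc t), f₁ (upperArc t);
        f₁ (conjCircle (upperArc t)), f₀ (conjCircle (upperArc t))] =
      !![g₀ (upperArc t), g₁ (upperArc t);
        g₁ (conjCircle (upperArc t)), g₀ (conjCircle (upperArc t))] := fun t => by
    simpa only [upperArcHadamard_apply, hadamardConj_hadamardConj] using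
      congrArg (fun φ => hadamardConj (φ t)) hab
  have h₀ : f₀ = g₀ := continuousMap_ext_of_upperArc
    (fun t => congr_fun₂ (heq t) 0 0) (fun t => congr_fun₂ (heq t) 1 1)
  have h₁ : f₁ = g₁ := continuousMap_ext_of_upperArc
    (fun t => congr_fun₂ (heq t) 0 1) (fun t => congr_fun₂ (heq t) 1 0)
  rw [h₀, h₁]

theorem surjOn_upperArcHadamard :
    Set.SurjOn upperArcHadamard (crossedSubalgebra ℂ conjCircle)
      {f | (f 0).IsDiag ∧ (f 1).IsDiag} := by
  rintro b ⟨hb₀, hb₁⟩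
  have hg : Continuous fun t => hadamardConj (b t) := continuous_hadamardConj.comp b.continuous
  let entry (i j : Fin 2) : C(I, ℂ) := ⟨fun t => hadamardConj (b t) i j, hg.matrix_elem i j⟩
  have hshape : ∀ t : I, (b t).IsDiag → entry 0 0 t = entry 1 1 t ∧ entry 0 1 t = entry 1 0 t :=
    fun t hbt => isDiag_hadamardConj_iff.1 (by rwa [hadamardConj_hadamardConj])
  obtain ⟨f₀, hf₀⟩ := exists_upperArc_conjCircle_eq (entry 0 0) (entry 1 1)
    (hshape 0 hb₀).1 (hshape 1 hb₁).1
  obtain ⟨f₁, hf₁⟩ := exists_upperArc_conjCircle_eq (entry 0 1) (entry 1 0)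
    (hshape 0 hb₀).2 (hshape 1 hb₁).2
  refine ⟨_, (mem_crossedSubalgebra_iff conjCircle_conjCircle).2 ⟨f₀, f₁, rfl⟩, ?_⟩
  ext t : 1
  rw [upperArcHadamard_apply, (hf₀ t).1, (hf₀ t).2, (hf₁ t).1, (hf₁ t).2]
  simp only [entry, ContinuousMap.coe_mk]
  rw [← eta_fin_two (hadamardConj (b t)), hadamardConj_hadamardConj]

end UnitCircle

open UnitCircle

/-- with `T` the unit circle and `c(z) = z̄`, the set `D` of matrices
`[[f₀, f₁],[f₁∘c, f₀∘c]]` is a unital star-subalgebra of `M₂(C(T,ℂ))`, and `D` is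
star-isomorphic to `B = {f ∈ C([0,1], M₂(ℂ)) : f(0), f(1) diagonal}`. -/
theorem stmt_16
    (c : C({z : ℂ // ‖z‖ = 1}, {z : ℂ // ‖z‖ = 1}))
    (hc : ∀ z : {z : ℂ // ‖z‖ = 1}, (c z : ℂ) = starRingEnd ℂ (z : ℂ))
    (D : Set (Matrix (Fin 2) (Fin 2) C({z : ℂ // ‖z‖ = 1}, ℂ)))
    (hD : D = {a | ∃ f₀ f₁ : C({z : ℂ // ‖z‖ = 1}, ℂ),
      a = !![f₀, f₁; f₁.comp c, f₀.comp c]})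
    (B : Set C(unitInterval, Matrix (Fin 2) (Fin 2) ℂ))
    (hB : B = {f | (f 0).IsDiag ∧ (f 1).IsDiag}) :
    -- D is a unital star-subalgebra of M₂(C(T,ℂ)):
    ((1 : Matrix (Fin 2) (Fin 2) C({z : ℂ // ‖z‖ = 1}, ℂ)) ∈ D ∧
     (∀ a b, a ∈ D → b ∈ D → a + b ∈ D) ∧
     (∀ a b, a ∈ D → b ∈ D → a * b ∈ D) ∧
     (∀ (r : ℂ) a, a ∈ D → r • a ∈ D) ∧
     (∀ a, a ∈ D → star a ∈ D)) ∧
    -- D is star-isomorphic to B: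
    ∃ Φ : Matrix (Fin 2) (Fin 2) C({z : ℂ // ‖z‖ = 1}, ℂ) →
        C(unitInterval, Matrix (Fin 2) (Fin 2) ℂ),
      (∀ a ∈ D, Φ a ∈ B) ∧
      (∀ b ∈ B, ∃ a ∈ D, Φ a = b) ∧
      (∀ a b, a ∈ D → b ∈ D → Φ a = Φ b → a = b) ∧
      (∀ a b, a ∈ D → b ∈ D → Φ (a + b) = Φ a + Φ b) ∧
      (∀ a b, a ∈ D → b ∈ D → Φ (a * b) = Φ a * Φ b) ∧
      (∀ (r : ℂ) a, a ∈ D → Φ (r • a) = r • Φ a) ∧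
      (∀ a, a ∈ D → Φ (star a) = star (Φ a)) ∧
      Φ 1 = 1 := by
  obtain rfl : c = conjCircle := ContinuousMap.ext fun z => Subtype.ext (hc z)
  obtain rfl : D = crossedSubalgebra ℂ conjCircle := by
    rw [hD]; ext a; exact (mem_crossedSubalgebra_iff conjCircle_conjCircle).symm
  subst hB
  refine ⟨⟨one_mem _, fun _ _ => add_mem, fun _ _ => mul_mem,
      fun r _ ha => StarSubalgebra.smul_mem _ ha r, fun _ => star_mem⟩,
    upperArcHadamard, mapsTo_upperArcHadamard, surjOn_upperArcHadamard,
    fun _ _ ha hb => injOn_upperArcHadamard ha hb, fun a b _ _ => map_add _ a b,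
    fun a b _ _ => map_mul _ a b, fun r a _ => map_smul _ r a, fun a _ => map_star _ a,
    map_one _⟩
end
end

section
/- Let θ₁ : [0,2] → [0,2] be θ₁(t) = 2 − t, and let D be the set of all 2×2 matrices over C([0,2],ℂ) of the form [[f₀, f₁],[f₁∘θ₁, f₀∘θ₁]] with f₀, f₁ ∈ C([0,2],ℂ). Then D is a unital star-subalgebra of M₂(C([0,2],ℂ)) and D is star-isomorphic to the algebra A(1) = {f ∈ C([0,1], M₂(ℂ)) : f(1) is a diagonal matrix}. -/
/-!
Restricting to `[0, 1]` and then conjugating by the Hadamard unitary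
`H = (1/√2) [[1, 1], [1, -1]]` is a ⋆-homomorphism `M₂(C([0,2])) → C([0,1], M₂)`.
It is injective on `D` because `[[f₀, f₁], [f₁ ∘ θ₁, f₀ ∘ θ₁]]` restricted to `[0, 1]` records
`f₀, f₁` on `[0, 1]` and on `θ₁ [0, 1] = [1, 2]`. Its image is `A(1)` because `M` satisfies
`M₀₀ = M₁₁, M₀₁ = M₁₀` exactly when `H M H` is diagonal, and at the fixed point `1` of `θ₁` an
element of `D` takes a value of that shape; conversely such boundary values allow the entries
on `[0, 1]` and on `[1, 2]` to be glued at `1`.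
-/

open Matrix Set ContinuousMap

section MatrixOfContinuousMaps

variable {X n R : Type*} [TopologicalSpace X] [Fintype n] [DecidableEq n]
  [CommRing R] [StarRing R] [TopologicalSpace R] [IsTopologicalRing R] [ContinuousStar R]

def Matrix.toContinuousMap : Matrix n n C(X, R) →⋆ₐ[R] C(X, Matrix n n R) where
  toFun a := ⟨fun x => a.map (· x), continuous_matrix fun i j => (a i j).continuous⟩
  map_one' := by ext x i j; by_cases h : i = j <;> simp [h]
  map_mul' a b := by ext x i j; simp [mul_apply]
  map_zero' := by ext; simp
  map_add' a b := by ext; simp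
  commutes' r := by ext x i j; by_cases h : i = j <;> simp [algebraMap_eq_diagonal, h]
  map_star' a := by ext; simp [star_apply]

/-- For an involution `θ`, the regular representation of the crossed product `C(X) ⋊_θ ℤ₂`. -/
def crossedProductStarSubalgebra (θ : C(X, X)) (hθ : Function.Involutive θ) :
    StarSubalgebra R (Matrix (Fin 2) (Fin 2) C(X, R)) where
  carrier := {a | ∃ f₀ f₁ : C(X, R), a = !![f₀, f₁; f₁.comp θ, f₀.comp θ]}
  mul_mem' := by
    rintro _ _ ⟨f₀, f₁, rfl⟩ ⟨g₀, g₁, rfl⟩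
    refine ⟨f₀ * g₀ + f₁ * g₁.comp θ, f₀ * g₁ + f₁ * g₀.comp θ, ?_⟩
    have comp_comp (f : C(X, R)) : (f.comp θ).comp θ = f := by ext; simp [hθ _]
    ext i j
    fin_cases i <;> fin_cases j <;>
      simp [Matrix.mul_apply, Fin.sum_univ_two, add_comp, mul_comp, comp_comp] <;> ring
  add_mem' := by
    rintro _ _ ⟨f₀, f₁, rfl⟩ ⟨g₀, g₁, rfl⟩
    exact ⟨f₀ + g₀, f₁ + g₁, by ext i j; fin_cases i <;> fin_cases j <;> simp [add_comp]⟩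
  algebraMap_mem' r := ⟨algebraMap R C(X, R) r, 0, by
    ext i j; fin_cases i <;> fin_cases j <;> simp [algebraMap_eq_diagonal]⟩
  star_mem' := by
    rintro _ ⟨f₀, f₁, rfl⟩
    refine ⟨star f₀, (star f₁).comp θ, ?_⟩
    ext i j
    fin_cases i <;> fin_cases j <;> simp [Matrix.star_apply, hθ _]

end MatrixOfContinuousMaps

noncomputable def hadamard₂ : Matrix (Fin 2) (Fin 2) ℂ := (Real.sqrt 2 : ℂ)⁻¹ • !![1, 1; 1, -1]

lemma hadamard₂_conj_eq (M : Matrix (Fin 2) (Fin 2) ℂ) :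
    hadamard₂ * M * hadamard₂ = (2 : ℂ)⁻¹ •
      !![M 0 0 + M 0 1 + M 1 0 + M 1 1, M 0 0 - M 0 1 + M 1 0 - M 1 1;
         M 0 0 + M 0 1 - M 1 0 - M 1 1, M 0 0 - M 0 1 - M 1 0 + M 1 1] := by
  have inv_sqrt_two_sq : ((Real.sqrt 2 : ℂ))⁻¹ * ((Real.sqrt 2 : ℂ))⁻¹ = 2⁻¹ := by
    rw [← mul_inv, ← Complex.ofReal_mul, Real.mul_self_sqrt zero_le_two]; norm_num
  rw [hadamard₂, smul_mul, smul_mul_smul_comm, inv_sqrt_two_sq]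
  congr 1
  ext i j
  fin_cases i <;> fin_cases j <;>
    simp [Matrix.mul_apply, vecMul, dotProduct, Fin.sum_univ_two] <;> ring

lemma hadamard₂_mul_self : hadamard₂ * hadamard₂ = 1 := by
  have h := hadamard₂_conj_eq 1
  rw [mul_one] at h
  rw [h]
  ext i j
  fin_cases i <;> fin_cases j <;> norm_num

lemma hadamard₂_conj_conj (M : Matrix (Fin 2) (Fin 2) ℂ) :
    hadamard₂ * (hadamard₂ * M * hadamard₂) * hadamard₂ = M := by
  simp only [← mul_assoc, hadamard₂_mul_self, one_mul]
  rw [mul_assoc, hadamard₂_mul_self, mul_one]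

lemma star_hadamard₂ : star hadamard₂ = hadamard₂ := by
  ext i j
  fin_cases i <;> fin_cases j <;> simp [hadamard₂, Matrix.star_apply]

lemma hadamard₂_mem_unitary : hadamard₂ ∈ unitary (Matrix (Fin 2) (Fin 2) ℂ) := by
  rw [Unitary.mem_iff, star_hadamard₂, and_self, hadamard₂_mul_self]

lemma Matrix.isDiag_fin_two_iff_s19 {α : Type*} [Zero α] (A : Matrix (Fin 2) (Fin 2) α) :
    A.IsDiag ↔ A 0 1 = 0 ∧ A 1 0 = 0 := by
  refine ⟨fun h => ⟨h (by decide), h (by decide)⟩, fun ⟨h₀₁, h₁₀⟩ i j hij => ?_⟩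
  fin_cases i <;> fin_cases j <;> simp_all

lemma isDiag_hadamard₂_conj_iff (M : Matrix (Fin 2) (Fin 2) ℂ) :
    (hadamard₂ * M * hadamard₂).IsDiag ↔ M 0 0 = M 1 1 ∧ M 0 1 = M 1 0 := by
  simp only [hadamard₂_conj_eq, smul_of, smul_cons, smul_eq_mul, Matrix.smul_empty,
    isDiag_fin_two_iff_s19, of_apply, cons_val', cons_val_one, cons_val_fin_one, cons_val_zero,
    mul_eq_zero, inv_eq_zero, OfNat.ofNat_ne_zero, false_or]
  constructor
  · rintro ⟨h₁, h₂⟩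
    exact ⟨by linear_combination (h₁ + h₂) / 2, by linear_combination (h₂ - h₁) / 2⟩
  · rintro ⟨h₁, h₂⟩
    exact ⟨by linear_combination h₁ - h₂, by linear_combination h₁ + h₂⟩

noncomputable def hadamard₂Conj : Matrix (Fin 2) (Fin 2) ℂ ≃⋆ₐ[ℂ] Matrix (Fin 2) (Fin 2) ℂ :=
  Unitary.conjStarAlgAut ℂ _ ⟨hadamard₂, hadamard₂_mem_unitary⟩

lemma hadamard₂Conj_apply (M : Matrix (Fin 2) (Fin 2) ℂ) :
    hadamard₂Conj M = hadamard₂ * M * hadamard₂ := by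
  simp [hadamard₂Conj, star_hadamard₂]

instance : Fact ((0 : ℝ) ≤ 1) := ⟨zero_le_one⟩
instance : Fact ((1 : ℝ) ≤ 2) := ⟨one_le_two⟩

@[simp] lemma coe_IccInclusionLeft (s : unitInterval) :
    ((IccInclusionLeft s : Icc (0 : ℝ) 2) : ℝ) = s := rfl

def iccReflect : C(Icc (0 : ℝ) 2, Icc (0 : ℝ) 2) :=
  ⟨fun t => ⟨2 - t, by linarith [t.2.2], by linarith [t.2.1]⟩, by fun_prop⟩

@[simp] lemma coe_iccReflect (t : Icc (0 : ℝ) 2) : (iccReflect t : ℝ) = 2 - t := rfl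

lemma iccReflect_involutive : Function.Involutive iccReflect := fun t => by ext; simp

lemma exists_eq_IccInclusionLeft_or_eq_iccReflect (t : Icc (0 : ℝ) 2) :
    ∃ s : unitInterval, IccInclusionLeft s = t ∨ iccReflect (IccInclusionLeft s) = t := by
  rcases le_total (t : ℝ) 1 with ht | ht
  · exact ⟨⟨t, t.2.1, ht⟩, Or.inl rfl⟩
  · exact ⟨⟨2 - t, by linarith [t.2.2], by linarith⟩, Or.inr (by ext; simp)⟩

lemma eq_of_eq_on_IccInclusionLeft_and_iccReflect {Y : Type*} {f g : Icc (0 : ℝ) 2 → Y}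
    (h : ∀ s : unitInterval, f (IccInclusionLeft s) = g (IccInclusionLeft s))
    (h' : ∀ s : unitInterval, f (iccReflect (IccInclusionLeft s)) =
      g (iccReflect (IccInclusionLeft s))) : f = g := by
  funext t
  obtain ⟨s, rfl | rfl⟩ := exists_eq_IccInclusionLeft_or_eq_iccReflect t
  exacts [h s, h' s]

lemma exists_continuousMap_glue_iccReflect {Y : Type*} [TopologicalSpace Y]
    (g h : C(unitInterval, Y)) (hgh : g 1 = h 1) : ∃ f : C(Icc (0 : ℝ) 2, Y),
      ∀ s : unitInterval,
        f (IccInclusionLeft s) = g s ∧ f (iccReflect (IccInclusionLeft s)) = h s := by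
  let σ : C(Icc (1 : ℝ) 2, unitInterval) :=
    ⟨fun t => ⟨2 - t, by linarith [t.2.2], by linarith [t.2.1]⟩, by fun_prop⟩
  have hb : g ⊤ = (h.comp σ) ⊥ := by
    have hσ : σ ⊥ = 1 := by ext; norm_num [σ]
    exact hgh.trans (congrArg h hσ.symm)
  refine ⟨concat g (h.comp σ), fun s => ⟨?_, ?_⟩⟩
  · exact congr($(concat_comp_IccInclusionLeft hb) s)
  · rw [concat_right hb (by simp; linarith [s.2.2])]
    exact congrArg h (by ext; simp [σ])

noncomputable def restrictConjHadamard₂ :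
    Matrix (Fin 2) (Fin 2) C(Icc (0 : ℝ) 2, ℂ) →⋆ₐ[ℂ] C(unitInterval, Matrix (Fin 2) (Fin 2) ℂ) :=
  (compStarAlgHom unitInterval hadamard₂Conj.toStarAlgHom (by
      change Continuous fun M => hadamard₂Conj M
      simp only [hadamard₂Conj_apply]
      fun_prop)).comp
    ((compStarAlgHom' ℂ _ IccInclusionLeft).comp Matrix.toContinuousMap)

lemma restrictConjHadamard₂_apply_crossedProduct (f₀ f₁ : C(Icc (0 : ℝ) 2, ℂ))
    (s : unitInterval) :
    restrictConjHadamard₂ !![f₀, f₁; f₁.comp iccReflect, f₀.comp iccReflect] s =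
      hadamard₂ * !![f₀ (IccInclusionLeft s), f₁ (IccInclusionLeft s);
        f₁ (iccReflect (IccInclusionLeft s)), f₀ (iccReflect (IccInclusionLeft s))] *
        hadamard₂ := by
  rw [← hadamard₂Conj_apply]
  refine congrArg hadamard₂Conj ?_
  ext i j
  fin_cases i <;> fin_cases j <;> rfl

lemma isDiag_restrictConjHadamard₂_one {a : Matrix (Fin 2) (Fin 2) C(Icc (0 : ℝ) 2, ℂ)}
    (ha : a ∈ crossedProductStarSubalgebra iccReflect iccReflect_involutive) :
    (restrictConjHadamard₂ a 1).IsDiag := by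
  obtain ⟨f₀, f₁, rfl⟩ := ha
  have h₁ : iccReflect (IccInclusionLeft (1 : unitInterval)) =
      IccInclusionLeft (1 : unitInterval) := by
    ext; norm_num
  rw [restrictConjHadamard₂_apply_crossedProduct, h₁, isDiag_hadamard₂_conj_iff]
  simp

lemma restrictConjHadamard₂_injOn :
    InjOn restrictConjHadamard₂
      (crossedProductStarSubalgebra (R := ℂ) iccReflect iccReflect_involutive : Set _) := by
  rintro _ ⟨f₀, f₁, rfl⟩ _ ⟨g₀, g₁, rfl⟩ h
  have hs (s : unitInterval) :
      !![f₀ (IccInclusionLeft s), f₁ (IccInclusionLeft s);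
        f₁ (iccReflect (IccInclusionLeft s)), f₀ (iccReflect (IccInclusionLeft s))] =
      !![g₀ (IccInclusionLeft s), g₁ (IccInclusionLeft s);
        g₁ (iccReflect (IccInclusionLeft s)), g₀ (iccReflect (IccInclusionLeft s))] := by
    have h := congr($h s)
    rw [restrictConjHadamard₂_apply_crossedProduct, restrictConjHadamard₂_apply_crossedProduct,
      ← hadamard₂Conj_apply, ← hadamard₂Conj_apply] at h
    exact hadamard₂Conj.injective h
  have h₀ : f₀ = g₀ := DFunLike.coe_injective <| eq_of_eq_on_IccInclusionLeft_and_iccReflect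
    (fun s => by simpa using congr_fun₂ (hs s) 0 0) (fun s => by simpa using congr_fun₂ (hs s) 1 1)
  have h₁ : f₁ = g₁ := DFunLike.coe_injective <| eq_of_eq_on_IccInclusionLeft_and_iccReflect
    (fun s => by simpa using congr_fun₂ (hs s) 0 1) (fun s => by simpa using congr_fun₂ (hs s) 1 0)
  rw [h₀, h₁]

lemma exists_restrictConjHadamard₂_eq {b : C(unitInterval, Matrix (Fin 2) (Fin 2) ℂ)}
    (hb : (b 1).IsDiag) : ∃ a ∈ crossedProductStarSubalgebra iccReflect iccReflect_involutive,
      restrictConjHadamard₂ a = b := by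
  let c : C(unitInterval, Matrix (Fin 2) (Fin 2) ℂ) :=
    ⟨fun s => hadamard₂ * b s * hadamard₂, by fun_prop⟩
  have hc : c 1 0 0 = c 1 1 1 ∧ c 1 0 1 = c 1 1 0 := by
    rw [← isDiag_hadamard₂_conj_iff]
    simpa [c, hadamard₂_conj_conj] using hb
  let entry (i j : Fin 2) : C(unitInterval, ℂ) := ⟨fun s => c s i j, c.continuous.matrix_elem i j⟩
  obtain ⟨f₀, hf₀⟩ := exists_continuousMap_glue_iccReflect (entry 0 0) (entry 1 1) hc.1
  obtain ⟨f₁, hf₁⟩ := exists_continuousMap_glue_iccReflect (entry 0 1) (entry 1 0) hc.2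
  refine ⟨_, ⟨f₀, f₁, rfl⟩, ContinuousMap.ext fun s => ?_⟩
  have hfc : !![f₀ (IccInclusionLeft s), f₁ (IccInclusionLeft s);
      f₁ (iccReflect (IccInclusionLeft s)), f₀ (iccReflect (IccInclusionLeft s))] = c s := by
    ext i j
    fin_cases i <;> fin_cases j <;> simp [hf₀ s, hf₁ s, entry]
  rw [restrictConjHadamard₂_apply_crossedProduct, hfc]
  exact hadamard₂_conj_conj (b s)

/-- with `θ₁ : [0,2] → [0,2]`, `θ₁(t) = 2 - t`, the set `D` of matrices
`[[f₀, f₁],[f₁∘θ₁, f₀∘θ₁]]` is a unital star-subalgebra of `M₂(C([0,2],ℂ))`, and `D`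
is star-isomorphic to `A(1) = {f ∈ C([0,1], M₂(ℂ)) : f(1) diagonal}`. -/
theorem stmt_19
    (θ₁ : C(Set.Icc (0 : ℝ) 2, Set.Icc (0 : ℝ) 2))
    (hθ₁ : ∀ t : Set.Icc (0 : ℝ) 2, (θ₁ t : ℝ) = 2 - (t : ℝ))
    (D : Set (Matrix (Fin 2) (Fin 2) C(Set.Icc (0 : ℝ) 2, ℂ)))
    (hD : D = {a | ∃ f₀ f₁ : C(Set.Icc (0 : ℝ) 2, ℂ),
      a = !![f₀, f₁; f₁.comp θ₁, f₀.comp θ₁]})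
    (A1 : Set C(unitInterval, Matrix (Fin 2) (Fin 2) ℂ))
    (hA1 : A1 = {f | (f 1).IsDiag}) :
    -- D is a unital star-subalgebra of M₂(C([0,2],ℂ)):
    ((1 : Matrix (Fin 2) (Fin 2) C(Set.Icc (0 : ℝ) 2, ℂ)) ∈ D ∧
     (∀ a b, a ∈ D → b ∈ D → a + b ∈ D) ∧
     (∀ a b, a ∈ D → b ∈ D → a * b ∈ D) ∧
     (∀ (r : ℂ) a, a ∈ D → r • a ∈ D) ∧
     (∀ a, a ∈ D → star a ∈ D)) ∧
    -- D is star-isomorphic to A(1):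
    ∃ Φ : Matrix (Fin 2) (Fin 2) C(Set.Icc (0 : ℝ) 2, ℂ) →
        C(unitInterval, Matrix (Fin 2) (Fin 2) ℂ),
      (∀ a ∈ D, Φ a ∈ A1) ∧
      (∀ b ∈ A1, ∃ a ∈ D, Φ a = b) ∧
      (∀ a b, a ∈ D → b ∈ D → Φ a = Φ b → a = b) ∧
      (∀ a b, a ∈ D → b ∈ D → Φ (a + b) = Φ a + Φ b) ∧
      (∀ a b, a ∈ D → b ∈ D → Φ (a * b) = Φ a * Φ b) ∧
      (∀ (r : ℂ) a, a ∈ D → Φ (r • a) = r • Φ a) ∧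
      (∀ a, a ∈ D → Φ (star a) = star (Φ a)) ∧
      Φ 1 = 1 := by
  obtain rfl : θ₁ = iccReflect := ContinuousMap.ext fun t => Subtype.ext (hθ₁ t)
  subst hD hA1
  let S := crossedProductStarSubalgebra (R := ℂ) iccReflect iccReflect_involutive
  refine ⟨⟨S.one_mem, fun a b => S.add_mem, fun a b => S.mul_mem, fun r a ha => S.smul_mem ha r,
    fun a ha => star_mem (s := S) ha⟩, restrictConjHadamard₂,
    fun a => isDiag_restrictConjHadamard₂_one, fun b => exists_restrictConjHadamard₂_eq,
    fun a b ha hb => restrictConjHadamard₂_injOn ha hb,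
    fun a b _ _ => map_add _ a b, fun a b _ _ => map_mul _ a b, fun r a _ => map_smul _ r a,
    fun a _ => map_star _ a, map_one _⟩
end
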